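/- arXiv:2108.13257 — 9 statements merged into one kernel-verified Lean document; each statement's English description precedes it below -/
import Mathlib

section
/- Let h_0(E) = E - λ, h_1(E) = E² - λ² - 2, and h_{n+1}(E) = h_n(E)(h_{n-1}(E)² - 2) - 2 for n ≥ 1. Then for every n ≥ 0 and every real E, h_{n+1}(E) - (h_n(E)² - 2) = (-1)^n · 2λ · ∏_{j=0}^{n} h_j(E). -/
/-- Lemma 2.9 (fundamental identity) for the period-doubling trace polynomials. -/
theorem pd_trace_fundamental_identity (lam : ℝ) (h : ℕ → ℝ → ℝ)
    (h0 : ∀ E, h 0 E = E - lam)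
    (h1 : ∀ E, h 1 E = E ^ 2 - lam ^ 2 - 2)
    (hrec : ∀ n : ℕ, ∀ E, h (n + 2) E = h (n + 1) E * ((h n E) ^ 2 - 2) - 2) :
    ∀ (n : ℕ) (E : ℝ),
      h (n + 1) E - ((h n E) ^ 2 - 2)
        = (-1 : ℝ) ^ n * (2 * lam) * ∏ j ∈ Finset.range (n + 1), h j E := by
  intro n
  induction n with
  | zero =>
    intro E
    simp [h0, h1]
    ring
  | succ n ih =>
    intro E
    rw [Finset.prod_range_succ, hrec n E]
    have := ih E
    rw [Finset.prod_range_succ] at this ⊢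
    linear_combination (-(h (n+1) E)) * this
end

section
/- Let Z_n denote the zero set of h_n. If n ≠ m then Z_n and Z_m are disjoint. -/
/-- For `λ ≠ 0`, the zero sets of distinct trace polynomials are disjoint. -/
theorem pd_trace_zero_sets_disjoint (lam : ℝ) (hlam : lam ≠ 0) (h : ℕ → ℝ → ℝ)
    (h0 : ∀ E, h 0 E = E - lam)
    (h1 : ∀ E, h 1 E = E ^ 2 - lam ^ 2 - 2)
    (hrec : ∀ n : ℕ, ∀ E, h (n + 2) E = h (n + 1) E * ((h n E) ^ 2 - 2) - 2) :
    ∀ n m : ℕ, n ≠ m →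
      {E : ℝ | h n E = 0} ∩ {E : ℝ | h m E = 0} = ∅ := by
  have key : ∀ n : ℕ, ∀ E : ℝ, h n E = 0 → ∀ m, n < m → h m E ≠ 0 := by
    intro n E hE
    have hn1 : h (n + 1) E = -2 := by
      cases n with
      | zero =>
        have e1 := h0 E
        have e2 := h1 E
        have hEl : E = lam := by linarith [hE ▸ e1.symm.trans hE]
        rw [e2, hEl]; ring
      | succ k =>
        have := hrec k E
        rw [hE] at this
        rw [this]; ring
    have hn2 : h (n + 2) E = 2 := by
      rw [hrec n E, hE, hn1]; ring
    have hn3 : h (n + 3) E = 2 := by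
      have e := hrec (n + 1) E
      rw [show n + 3 = n + 1 + 2 from rfl, e, hn1, hn2]; ring
    have hall : ∀ k : ℕ, h (n + 2 + k) E = 2 ∧ h (n + 3 + k) E = 2 := by
      intro k
      induction k with
      | zero => exact ⟨hn2, hn3⟩
      | succ j ih =>
        constructor
        · rw [show n + 2 + (j + 1) = n + 3 + j by ring]; exact ih.2
        · have e := hrec (n + 2 + j) E
          rw [show n + 2 + j + 2 = n + 3 + (j + 1) by ring] at e
          rw [show n + 2 + j + 1 = n + 3 + j by ring] at e
          rw [e, ih.1, ih.2]; ring
    intro m hm hm0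
    obtain ⟨k, rfl⟩ := Nat.exists_eq_add_of_lt hm
    cases k with
    | zero => rw [hn1] at hm0; norm_num at hm0
    | succ j =>
      have := (hall j).1
      rw [show n + 2 + j = n + (j + 1) + 1 by ring] at this
      rw [this] at hm0; norm_num at hm0
  intro n m hnm
  ext E
  simp only [Set.mem_inter_iff, Set.mem_setOf_eq, Set.mem_empty_iff_false, iff_false, not_and]
  intro hnE hmE
  rcases hnm.lt_or_gt with hlt | hlt
  · exact key n E hnE m hlt hmE
  · exact key m E hmE n hlt hnE
end

section
/- Suppose E ∈ ℝ and there exists n₀ ≥ 0 and δ > 0 with |h_{n₀}(E)| ≥ 2 + δ and |h_{n₀+1}(E)| ≥ 2 + δ. Then |h_n(E)| → ∞ as n → ∞; in fact |h_{n₀+k}(E)| ≥ 2 + 10^{⌊k/2⌋} δ for all k ≥ 0. -/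
lemma pd_key_step (x y a b : ℝ) (ha : 0 ≤ a) (hb : 0 ≤ b)
    (hx : 2 + a ≤ |x|) (hy : 2 + b ≤ |y|) :
    2 + 8 * a + 2 * b ≤ |y * (x ^ 2 - 2) - 2| := by
  have hx2 : 2 + 4 * a + a ^ 2 ≤ x ^ 2 - 2 := by
    nlinarith [sq_abs x, abs_nonneg x]
  have h1 : (2 + b) * (2 + 4 * a + a ^ 2) ≤ |y| * (x ^ 2 - 2) :=
    mul_le_mul hy hx2 (by nlinarith) (le_trans (by linarith) hy)
  have h2 : |y| * (x ^ 2 - 2) = |y * (x ^ 2 - 2)| := by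
    rw [abs_mul, abs_of_nonneg (by nlinarith : (0:ℝ) ≤ x ^ 2 - 2)]
  have h3 : |y * (x ^ 2 - 2)| - 2 ≤ |y * (x ^ 2 - 2) - 2| := by
    have := abs_sub_abs_le_abs_sub (y * (x ^ 2 - 2)) 2
    simpa using this
  nlinarith

/-- If two consecutive traces exceed `2 + δ` in absolute value, the trace orbit
grows at least like `2 + 10^⌊k/2⌋ δ`, and in particular tends to infinity. -/
theorem pd_trace_escape (lam : ℝ) (h : ℕ → ℝ → ℝ)
    (h0 : ∀ E, h 0 E = E - lam)
    (h1 : ∀ E, h 1 E = E ^ 2 - lam ^ 2 - 2)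
    (hrec : ∀ n : ℕ, ∀ E, h (n + 2) E = h (n + 1) E * ((h n E) ^ 2 - 2) - 2)
    (E : ℝ) (n0 : ℕ) (δ : ℝ) (hδ : 0 < δ)
    (hA : 2 + δ ≤ |h n0 E|) (hB : 2 + δ ≤ |h (n0 + 1) E|) :
    (∀ k : ℕ, 2 + (10 : ℝ) ^ (k / 2) * δ ≤ |h (n0 + k) E|) ∧
      Filter.Tendsto (fun n => |h n E|) Filter.atTop Filter.atTop := by
  have pow_pos10 : ∀ m : ℕ, (0:ℝ) < 10 ^ m := fun m => by positivity
  have Q : ∀ m : ℕ, 2 + 10 ^ m * δ ≤ |h (n0 + 2 * m) E| ∧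
      2 + 10 ^ m * δ ≤ |h (n0 + 2 * m + 1) E| := by
    intro m
    induction m with
    | zero => simpa using ⟨hA, hB⟩
    | succ m ih =>
      obtain ⟨ih1, ih2⟩ := ih
      have hδm : (0:ℝ) ≤ 10 ^ m * δ := le_of_lt (by positivity)
      have e2 : 2 + 10 ^ (m+1) * δ ≤ |h (n0 + 2*m + 2) E| := by
        have := pd_key_step (h (n0 + 2*m) E) (h (n0 + 2*m + 1) E)
          (10 ^ m * δ) (10 ^ m * δ) hδm hδm ih1 ih2
        rw [← hrec (n0 + 2*m) E] at this
        calc 2 + 10 ^ (m+1) * δ = 2 + 8 * (10^m*δ) + 2 * (10^m*δ) := by ring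
        _ ≤ _ := this
      have e3 : 2 + 10 ^ (m+1) * δ ≤ |h (n0 + 2*m + 3) E| := by
        have hδm1 : (0:ℝ) ≤ 10 ^ (m+1) * δ := le_of_lt (by positivity)
        have := pd_key_step (h (n0 + 2*m + 1) E) (h (n0 + 2*m + 2) E)
          (10 ^ m * δ) (10 ^ (m+1) * δ) hδm hδm1 ih2 e2
        rw [← hrec (n0 + 2*m + 1) E] at this
        have h9 : 2 + 10 ^ (m+1) * δ ≤ 2 + 8 * (10^m*δ) + 2 * (10^(m+1)*δ) := by
          have : (10:ℝ)^(m+1) = 10 * 10^m := by ring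
          nlinarith [pow_pos10 m]
        calc 2 + 10 ^ (m+1) * δ ≤ _ := h9
        _ ≤ _ := this
      constructor
      · have : n0 + 2 * (m+1) = n0 + 2*m + 2 := by ring
        rw [this]; exact e2
      · have : n0 + 2 * (m+1) + 1 = n0 + 2*m + 3 := by ring
        rw [this]; exact e3
  have main : ∀ k : ℕ, 2 + (10 : ℝ) ^ (k / 2) * δ ≤ |h (n0 + k) E| := by
    intro k
    obtain ⟨m, rfl | rfl⟩ := Nat.even_or_odd' k
    · have : 2 * m / 2 = m := by omega
      rw [this]
      have := (Q m).1
      rwa [show n0 + 2*m = n0 + m*2 by ring] at this ⊢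
    · have : (2 * m + 1) / 2 = m := by omega
      rw [this]
      have := (Q m).2
      rwa [show n0 + 2*m + 1 = n0 + (2*m+1) by ring] at this
  refine ⟨main, ?_⟩
  rw [Filter.tendsto_atTop_atTop]
  intro C
  obtain ⟨M, hM⟩ := exists_nat_ge ((C - 2) / δ)
  refine ⟨n0 + 2 * M, fun n hn => ?_⟩
  obtain ⟨k, rfl⟩ := Nat.exists_eq_add_of_le (le_trans (Nat.le_add_right _ _) hn)
  have hk : M ≤ k / 2 := by omega
  have hMk : (M:ℝ) ≤ 10 ^ (k/2) := by
    calc (M:ℝ) ≤ (k/2 : ℕ) := by exact_mod_cast hk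
    _ ≤ 10 ^ (k/2) := by
        exact_mod_cast (Nat.lt_pow_self (by norm_num : 1 < 10) : k/2 < 10 ^ (k/2)).le
  have hCM : C ≤ 2 + (M:ℝ) * δ := by
    rw [div_le_iff₀ hδ] at hM; linarith
  calc C ≤ 2 + (M:ℝ) * δ := hCM
  _ ≤ 2 + 10 ^ (k/2) * δ := by nlinarith
  _ ≤ _ := main k
end

section
/- The period-doubling trace map f(x,y) = (y(x²-2) - 2, (y(x²-2)-2)(y²-2) - 2) has exactly four fixed points in ℝ²: (-1,-1), (2,2), (-α, α-1), and (α^{-1}, -(1+α^{-1})), where α = (1+√5)/2. -/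
/-- The period-doubling trace map. -/
noncomputable def pdTraceMap : ℝ × ℝ → ℝ × ℝ := fun p =>
  (p.2 * (p.1 ^ 2 - 2) - 2, (p.2 * (p.1 ^ 2 - 2) - 2) * (p.2 ^ 2 - 2) - 2)

/-- The trace map has exactly four fixed points. -/
theorem pd_trace_map_fixed_points (α : ℝ) (hα : α = (1 + Real.sqrt 5) / 2) :
    {p : ℝ × ℝ | pdTraceMap p = p}
      = {((-1 : ℝ), (-1 : ℝ)), ((2 : ℝ), (2 : ℝ)), (-α, α - 1),
          (α⁻¹, -(1 + α⁻¹))} := by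
  have hs : Real.sqrt 5 ^ 2 = 5 := Real.sq_sqrt (by norm_num)
  have hs0 : (0:ℝ) ≤ Real.sqrt 5 := Real.sqrt_nonneg 5
  have hq : α ^ 2 = α + 1 := by rw [hα]; nlinarith [hs]
  have hαpos : 0 < α := by rw [hα]; nlinarith
  have hinv : α⁻¹ = α - 1 := by
    have h1 : (α - 1) * α = 1 := by nlinarith [hq]
    exact (eq_inv_of_mul_eq_one_left h1).symm
  ext ⟨x, y⟩
  simp only [pdTraceMap, Set.mem_setOf_eq, Set.mem_insert_iff, Set.mem_singleton_iff,
    Prod.mk.injEq]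
  constructor
  · rintro ⟨h1, h2⟩
    rw [h1] at h2
    have hfac : (x - y) * (x * y + 1) = 0 := by linear_combination h1 - h2
    rcases mul_eq_zero.mp hfac with hxy | hxy
    · have hyx : y = x := by linarith
      have hcube : (x + 1) ^ 2 * (x - 2) = 0 := by
        linear_combination h1 - (x ^ 2 - 2) * hyx
      rcases mul_eq_zero.mp hcube with h | h
      · have hx : x = -1 := by
          have := pow_eq_zero_iff (n := 2) (by norm_num) |>.mp h
          linarith
        exact Or.inl ⟨hx, by rw [hyx, hx]⟩
      · have hx : x = 2 := by linarith
        exact Or.inr (Or.inl ⟨hx, by rw [hyx, hx]⟩)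
    · have h3 : x * y = -1 := by linarith
      have hxq : x ^ 2 + x - 1 = 0 := by
        linear_combination (-(1:ℝ)/2) * (x * h1 - (x ^ 2 - 2) * h3)
      have hfac2 : (x + α) * (x - (α - 1)) = 0 := by linear_combination hxq - hq
      rcases mul_eq_zero.mp hfac2 with h | h
      · have hxv : x = -α := by linarith
        have h4 : y * α = 1 := by rw [hxv] at h3; linarith [h3]; 
        have hyv : y = α - 1 := by rw [← hinv]; exact eq_inv_of_mul_eq_one_left h4
        exact Or.inr (Or.inr (Or.inl ⟨hxv, hyv⟩))
      · have hxv : x = α - 1 := by linarith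
        have h4 : (α - 1) * y = -1 := by rw [hxv] at h3; linarith [h3]
        have hyv : y = -α := by linear_combination α * h4 - y * hq
        refine Or.inr (Or.inr (Or.inr ⟨by rw [hinv]; exact hxv, ?_⟩))
        rw [hinv]; rw [hyv]; ring_nf
  · rintro (⟨hx, hy⟩ | ⟨hx, hy⟩ | ⟨hx, hy⟩ | ⟨hx, hy⟩) <;> subst hx <;> subst hy
    · norm_num
    · norm_num
    · constructor
      · linear_combination α * hq
      · linear_combination (α ^ 3 - 2 * α ^ 2 - 2 * α + 1) * hq
    · rw [hinv]
      constructor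
      · linear_combination (-α + 1) * hq
      · linear_combination (-α ^ 3 + α ^ 2 + 3 * α - 2) * hq
end

section
/- Let f(x,y) = (y(x²-2)-2, (y(x²-2)-2)(y²-2)-2) and U = {(x,y) : x < 0, y < 0, y(x²-2) - 2 < 0}. Then f restricted to U is injective, with inverse g(x,y) = (-√(2 - (2+x)/√(2 + (2+y)/x)), -√(2 + (2+y)/x)) on f(U); i.e., g(f(x,y)) = (x,y) for all (x,y) ∈ U. -/
/-- The domain `U`. -/
def pdU : Set (ℝ × ℝ) := {p | p.1 < 0 ∧ p.2 < 0 ∧ p.2 * (p.1 ^ 2 - 2) - 2 < 0}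

/-- The local inverse `g` of the trace map. -/
noncomputable def pdG : ℝ × ℝ → ℝ × ℝ := fun p =>
  (-Real.sqrt (2 - (2 + p.1) / Real.sqrt (2 + (2 + p.2) / p.1)),
    -Real.sqrt (2 + (2 + p.2) / p.1))

/-- `f` is injective on `U` with left inverse `g`. -/
theorem pd_trace_map_injOn_U :
    Set.InjOn pdTraceMap pdU ∧ ∀ p ∈ pdU, pdG (pdTraceMap p) = p := by
  have key : ∀ p ∈ pdU, pdG (pdTraceMap p) = p := by
    rintro ⟨x, y⟩ ⟨hx, hy, ha⟩
    have ha' : y * (x ^ 2 - 2) - 2 ≠ 0 := ne_of_lt ha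
    have hy' : y ≠ 0 := ne_of_lt hy
    simp only [pdTraceMap, pdG]
    have h2 : 2 + (2 + ((y * (x ^ 2 - 2) - 2) * (y ^ 2 - 2) - 2)) / (y * (x ^ 2 - 2) - 2)
        = y ^ 2 := by
      field_simp
      ring
    rw [h2]
    have hsy : Real.sqrt (y ^ 2) = -y := by
      rw [Real.sqrt_sq_eq_abs, abs_of_neg hy]
    rw [hsy]
    have h3 : 2 - (2 + (y * (x ^ 2 - 2) - 2)) / (-y) = x ^ 2 := by
      have h : 2 + (y * (x ^ 2 - 2) - 2) = (x ^ 2 - 2) * y := by ring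
      rw [h, mul_div_assoc, div_neg, div_self hy']
      ring
    rw [h3]
    have hsx : Real.sqrt (x ^ 2) = -x := by
      rw [Real.sqrt_sq_eq_abs, abs_of_neg hx]
    rw [hsx]
    simp
  exact ⟨fun p hp q hq h => by rw [← key p hp, ← key q hq, h], key⟩
end

section
/- Let D = {(x,y) : -√2 ≤ x ≤ 0, -√2 ≤ y ≤ 0, y ≤ x² - 2} and let f be the period-doubling trace map f(x,y) = (y(x²-2)-2, (y(x²-2)-2)(y²-2)-2). A point p ∈ D satisfies f^n(p) ∈ D for all n ∈ ℕ if and only if p = (-1,-1). -/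
/-- The compact "triangle" `D`. -/
noncomputable def pdD : Set (ℝ × ℝ) :=
  {p | -Real.sqrt 2 ≤ p.1 ∧ p.1 ≤ 0 ∧ -Real.sqrt 2 ≤ p.2 ∧ p.2 ≤ 0 ∧
    p.2 ≤ p.1 ^ 2 - 2}

namespace PDHelper

noncomputable def phiP (p : ℝ × ℝ) : ℝ := (p.1 + 1) + (p.1 ^ 2 - 2 - p.2) / 4
noncomputable def uP (p : ℝ × ℝ) : ℝ := p.1 ^ 2 - 2 - p.2

lemma s_lb : (1414213/1000000 : ℝ) ≤ Real.sqrt 2 := by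
  have h := Real.sq_sqrt (by norm_num : (2:ℝ) ≥ 0)
  nlinarith [Real.sqrt_nonneg 2]

lemma s_ub : Real.sqrt 2 ≤ (1414214/1000000 : ℝ) := by
  have h := Real.sq_sqrt (by norm_num : (2:ℝ) ≥ 0)
  nlinarith [Real.sqrt_nonneg 2]

set_option maxHeartbeats 2000000 in
lemma keyA' (x u : ℝ) (hu : 0 ≤ u)
    (hL : 0 ≤ x - (-(126/100))) (hH : 0 ≤ (-(76525/100000)) - x)
    (hsig : 0 ≤ x^2 - 58578/100000 - u)
    (hphi : 0 ≤ (x+1) + u/4) :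
    0 ≤ (x+1)*((x-1)*(x^2-3)-2) + u*((2-x^2)-1/2)
      + (1-(x+1)*((x-1)*(x^2-3))-u*(2-x^2))*u*((2-x^2)+u)/4 := by
  nlinarith [hphi, mul_nonneg (hu) (hphi), mul_nonneg (hu) (hsig), mul_nonneg (hu) (sq_nonneg (x+1)), mul_nonneg (hu) (sq_nonneg (2*(x+1)+u)), mul_nonneg (hphi) (hphi), mul_nonneg (hphi) (sq_nonneg (2*(x+1)+u)), mul_nonneg (sq_nonneg (x+1)) (sq_nonneg (x+1)), mul_nonneg (sq_nonneg (x+1)) (sq_nonneg u), mul_nonneg (mul_nonneg (hu) (hphi)) (hsig), mul_nonneg (mul_nonneg (hu) (hsig)) (hsig), mul_nonneg (mul_nonneg (hu) (hL)) (sq_nonneg u), mul_nonneg (mul_nonneg (hphi) (hphi)) (hH), mul_nonneg (mul_nonneg (hsig) (hsig)) (sq_nonneg u), mul_nonneg (mul_nonneg (hsig) (hL)) (sq_nonneg (x+1-u)), mul_nonneg (mul_nonneg (hH) (sq_nonneg (x+1))) (sq_nonneg (x+1)), mul_nonneg (mul_nonneg (hH) (sq_nonneg (x+1))) (sq_nonneg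 u), mul_nonneg (mul_nonneg (mul_nonneg (hu) (hsig)) (hsig)) (hsig)]

set_option maxHeartbeats 4000000 in
lemma keyB' (x u : ℝ) (hu : 0 ≤ u)
    (hL : 0 ≤ x - (-(125949/100000)))
    (hsig : 0 ≤ x^2 - 58578/100000 - u)
    (hnphi : 0 ≤ -((x+1) + u/4)) (hna : 0 ≤ -(x+1))
    (ht1 : 0 ≤ 141422/100000 - (1-(x+1)*((x-1)*(x^2-3))-u*(2-x^2)))
    (ht2 : 0 ≤ (1-(x+1)*((x-1)*(x^2-3))-u*(2-x^2)) - 7653/10000) :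
    0 ≤ (1-(x+1)*((x-1)*(x^2-3))-u*(2-x^2))*((2-x^2)+u) - 1 - u/4 := by
  nlinarith [hu, sq_nonneg u, mul_nonneg (hu) (hnphi), mul_nonneg (hu) (ht2), mul_nonneg (hnphi) (hL), mul_nonneg (hnphi) (ht1), mul_nonneg (hL) (sq_nonneg (x+1)), mul_nonneg (ht1) (sq_nonneg (x+1)), mul_nonneg (mul_nonneg (hu) (hsig)) (hL), mul_nonneg (mul_nonneg (hnphi) (hsig)) (hL), mul_nonneg (mul_nonneg (hsig) (hL)) (sq_nonneg (x+1))]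

lemma derived_bounds (x y : ℝ)
    (hx1 : -Real.sqrt 2 ≤ x) (hx2 : x ≤ 0) (hy1 : -Real.sqrt 2 ≤ y) (hy2 : y ≤ 0)
    (hy3 : y ≤ x ^ 2 - 2)
    (g1 : -Real.sqrt 2 ≤ y * (x ^ 2 - 2) - 2) (g2 : y * (x ^ 2 - 2) - 2 ≤ 0)
    (g3 : -Real.sqrt 2 ≤ (y * (x ^ 2 - 2) - 2) * (y ^ 2 - 2) - 2)
    (g5 : (y * (x ^ 2 - 2) - 2) * (y ^ 2 - 2) - 2 ≤ (y * (x ^ 2 - 2) - 2) ^ 2 - 2) :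
    -(125949/100000) ≤ x ∧ x ≤ -(76525/100000) ∧
    x ^ 2 - 2 - y ≤ x ^ 2 - 58578/100000 ∧
    -(141422/100000) ≤ y * (x ^ 2 - 2) - 2 ∧ y * (x ^ 2 - 2) - 2 ≤ -(7653/10000) := by
  have hs := Real.sq_sqrt (by norm_num : (2:ℝ) ≥ 0)
  have slb := s_lb
  have sub := s_ub
  have hxsq : x ^ 2 ≤ 2 := by nlinarith [Real.sqrt_nonneg 2]
  have hx3s : x ^ 2 ≤ 3 - Real.sqrt 2 := by
    nlinarith [mul_nonneg (by linarith : (0:ℝ) ≤ Real.sqrt 2 + y)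
      (by linarith : (0:ℝ) ≤ 2 - x ^ 2), Real.sqrt_nonneg 2]
  have b1 : -(125949/100000 : ℝ) ≤ x := by
    nlinarith [sq_nonneg (x + 125949/100000)]
  have hx2low : 2 - Real.sqrt 2 ≤ x ^ 2 := by linarith
  have b2 : x ≤ -(76525/100000 : ℝ) := by
    by_contra hc
    push_neg at hc
    nlinarith [mul_pos (by linarith : (0:ℝ) < x + 76525/100000)
      (by linarith : (0:ℝ) < 76525/100000 - x)]
  have b3 : x ^ 2 - 2 - y ≤ x ^ 2 - 58578/100000 := by linarith
  have b4 : -(141422/100000 : ℝ) ≤ y * (x ^ 2 - 2) - 2 := by linarith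
  have hX1sq : 2 - Real.sqrt 2 ≤ (y * (x ^ 2 - 2) - 2) ^ 2 := by nlinarith
  have b5 : y * (x ^ 2 - 2) - 2 ≤ -(7653/10000 : ℝ) := by
    by_contra hc
    push_neg at hc
    nlinarith [mul_pos (by linarith : (0:ℝ) < (y * (x ^ 2 - 2) - 2) + 7653/10000)
      (by linarith : (0:ℝ) < 7653/10000 - (y * (x ^ 2 - 2) - 2))]
  exact ⟨b1, b2, b3, b4, b5⟩

lemma mem_unfold (x y : ℝ) (h : (x, y) ∈ pdD) :
    -Real.sqrt 2 ≤ x ∧ x ≤ 0 ∧ -Real.sqrt 2 ≤ y ∧ y ≤ 0 ∧ y ≤ x ^ 2 - 2 := h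

lemma fmem_unfold (x y : ℝ) (h : pdTraceMap (x, y) ∈ pdD) :
    -Real.sqrt 2 ≤ y * (x ^ 2 - 2) - 2 ∧ y * (x ^ 2 - 2) - 2 ≤ 0 ∧
    -Real.sqrt 2 ≤ (y * (x ^ 2 - 2) - 2) * (y ^ 2 - 2) - 2 ∧
    (y * (x ^ 2 - 2) - 2) * (y ^ 2 - 2) - 2 ≤ 0 ∧
    (y * (x ^ 2 - 2) - 2) * (y ^ 2 - 2) - 2 ≤ (y * (x ^ 2 - 2) - 2) ^ 2 - 2 := h

lemma stepA (p : ℝ × ℝ) (hp : p ∈ pdD) (hfp : pdTraceMap p ∈ pdD)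
    (hphi : 0 ≤ phiP p) : 2 * phiP p ≤ phiP (pdTraceMap p) := by
  obtain ⟨x, y⟩ := p
  obtain ⟨hx1, hx2, hy1, hy2, hy3⟩ := mem_unfold x y hp
  obtain ⟨g1, g2, g3, g4, g5⟩ := fmem_unfold x y hfp
  obtain ⟨b1, b2, b3, b4, b5⟩ := derived_bounds x y hx1 hx2 hy1 hy2 hy3 g1 g2 g3 g5
  simp only [phiP] at hphi
  have key := keyA' x (x ^ 2 - 2 - y) (by linarith) (by linarith) (by linarith)
    (by linarith) (by linarith)
  simp only [phiP, pdTraceMap]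
  nlinarith [key]

lemma stepB (p : ℝ × ℝ) (hp : p ∈ pdD) (hfp : pdTraceMap p ∈ pdD)
    (hphi : phiP p ≤ 0) : uP p * (1 + uP p / 4) ≤ uP (pdTraceMap p) := by
  obtain ⟨x, y⟩ := p
  obtain ⟨hx1, hx2, hy1, hy2, hy3⟩ := mem_unfold x y hp
  obtain ⟨g1, g2, g3, g4, g5⟩ := fmem_unfold x y hfp
  obtain ⟨b1, b2, b3, b4, b5⟩ := derived_bounds x y hx1 hx2 hy1 hy2 hy3 g1 g2 g3 g5
  simp only [phiP] at hphi
  simp only [uP, pdTraceMap]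
  have hu : (0:ℝ) ≤ x ^ 2 - 2 - y := by linarith
  have hT : (1-(x+1)*((x-1)*(x^2-3))-(x ^ 2 - 2 - y)*(2-x^2)) = -(y*(x^2-2)-2) := by ring
  have key := keyB' x (x ^ 2 - 2 - y) hu (by linarith) (by linarith)
    (by linarith) (by linarith)
    (by rw [hT]; linarith) (by rw [hT]; linarith)
  nlinarith [mul_nonneg hu key]

lemma stepC (p : ℝ × ℝ) (hp : p ∈ pdD) (hfp : pdTraceMap p ∈ pdD)
    (hu0 : uP p = 0) : 9 * (p.1 + 1) ^ 2 ≤ ((pdTraceMap p).1 + 1) ^ 2 := by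
  obtain ⟨x, y⟩ := p
  obtain ⟨hx1, hx2, hy1, hy2, hy3⟩ := mem_unfold x y hp
  obtain ⟨g1, g2, g3, g4, g5⟩ := fmem_unfold x y hfp
  obtain ⟨b1, b2, b3, b4, b5⟩ := derived_bounds x y hx1 hx2 hy1 hy2 hy3 g1 g2 g3 g5
  simp only [uP] at hu0
  have hy' : y = x ^ 2 - 2 := by linarith
  subst hy'
  have hm : 3 ≤ (x - 1) * (x ^ 2 - 3) := by nlinarith
  simp only [pdTraceMap]
  have hid : ((x ^ 2 - 2) * (x ^ 2 - 2) - 2 + 1) = (x + 1) * ((x - 1) * (x ^ 2 - 3)) := by ring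
  nlinarith [mul_nonneg (mul_nonneg (by linarith : (0:ℝ) ≤ (x - 1) * (x ^ 2 - 3) - 3)
    (by linarith : (0:ℝ) ≤ (x - 1) * (x ^ 2 - 3) + 3)) (sq_nonneg (x + 1))]

lemma u_mul (p : ℝ × ℝ) :
    uP (pdTraceMap p) = (p.2 * (p.1 ^ 2 - 2) - 2) * p.2 * uP p := by
  simp only [uP, pdTraceMap]
  ring

lemma bounds (p : ℝ × ℝ) (hp : p ∈ pdD) :
    phiP p ≤ 2 ∧ uP p ≤ 2 ∧ (p.1 + 1) ^ 2 ≤ 6 := by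
  obtain ⟨x, y⟩ := p
  obtain ⟨hx1, hx2, hy1, hy2, hy3⟩ := mem_unfold x y hp
  have hs := Real.sq_sqrt (by norm_num : (2:ℝ) ≥ 0)
  have slb := s_lb
  have sub := s_ub
  have hxsq : x ^ 2 ≤ 2 := by nlinarith [Real.sqrt_nonneg 2]
  refine ⟨?_, ?_, ?_⟩
  · show (x + 1) + (x ^ 2 - 2 - y) / 4 ≤ 2; linarith
  · show x ^ 2 - 2 - y ≤ 2; linarith
  · show (x + 1) ^ 2 ≤ 6; nlinarith

end PDHelper

open PDHelper in
/-- A point of `D` stays in `D` under all iterates of the trace map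
iff it is the fixed point `(-1, -1)`. -/
theorem pd_trace_map_stays_in_D_iff :
    ∀ p ∈ pdD, (∀ n : ℕ, pdTraceMap^[n] p ∈ pdD) ↔ p = (-1, -1) := by
  intro p hp
  constructor
  · intro H
    set P : ℕ → ℝ × ℝ := fun n => pdTraceMap^[n] p with hPdef
    have hP0 : P 0 = p := rfl
    have hPs : ∀ n, P (n + 1) = pdTraceMap (P n) := fun n =>
      Function.iterate_succ_apply' _ _ _
    have hD : ∀ n, P n ∈ pdD := H
    have hu_nn : ∀ n, 0 ≤ uP (P n) := by
      intro n
      have h := (hD n).2.2.2.2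
      simp only [uP]
      linarith
    by_cases hcase : ∀ n, phiP (P n) ≤ 0
    · -- u must vanish
      have hu0 : uP p = 0 := by
        by_contra h0
        have hup : 0 < uP p := lt_of_le_of_ne (hP0 ▸ hu_nn 0) (Ne.symm h0)
        have hmono : ∀ n, uP p ≤ uP (P n) := by
          intro n
          induction n with
          | zero => rw [hP0]
          | succ n ih =>
            have hstep := stepB (P n) (hD n) (by rw [← hPs]; exact hD (n + 1)) (hcase n)
            have hnn := hu_nn n
            rw [hPs]
            nlinarith
        have hgrow : ∀ n, uP p * (1 + uP p / 4) ^ n ≤ uP (P n) := by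
          intro n
          induction n with
          | zero => simp [hP0]
          | succ n ih =>
            have hstep := stepB (P n) (hD n) (by rw [← hPs]; exact hD (n + 1)) (hcase n)
            have hnn := hu_nn n
            have hmn := hmono n
            have hpow : (0:ℝ) ≤ (1 + uP p / 4) ^ n := by positivity
            rw [hPs]
            calc uP p * (1 + uP p / 4) ^ (n + 1)
                = (uP p * (1 + uP p / 4) ^ n) * (1 + uP p / 4) := by ring
              _ ≤ uP (P n) * (1 + uP p / 4) := by
                  apply mul_le_mul_of_nonneg_right ih; nlinarith
              _ ≤ uP (P n) * (1 + uP (P n) / 4) := by nlinarith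
              _ ≤ uP (pdTraceMap (P n)) := hstep
        obtain ⟨n, hn⟩ := pow_unbounded_of_one_lt (2 / uP p)
          (by nlinarith : (1:ℝ) < 1 + uP p / 4)
        rw [div_lt_iff₀ hup] at hn
        have h2 := (bounds (P n) (hD n)).2.1
        have h3 := hgrow n
        nlinarith
      have huz : ∀ n, uP (P n) = 0 := by
        intro n
        induction n with
        | zero => rw [hP0]; exact hu0
        | succ n ih => rw [hPs, u_mul, ih, mul_zero]
      have hc : ∀ n, 9 ^ n * (p.1 + 1) ^ 2 ≤ ((P n).1 + 1) ^ 2 := by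
        intro n
        induction n with
        | zero => simp [hP0]
        | succ n ih =>
          have hstep := stepC (P n) (hD n) (by rw [← hPs]; exact hD (n + 1)) (huz n)
          rw [hPs]
          calc 9 ^ (n + 1) * (p.1 + 1) ^ 2 = 9 * (9 ^ n * (p.1 + 1) ^ 2) := by ring
            _ ≤ 9 * ((P n).1 + 1) ^ 2 := by linarith
            _ ≤ ((pdTraceMap (P n)).1 + 1) ^ 2 := hstep
      have hx0 : p.1 = -1 := by
        by_contra hne
        have hne' : p.1 + 1 ≠ 0 := fun h => hne (by linarith)
        have hpos : 0 < (p.1 + 1) ^ 2 := by positivity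
        obtain ⟨n, hn⟩ := pow_unbounded_of_one_lt (6 / (p.1 + 1) ^ 2)
          (by norm_num : (1:ℝ) < 9)
        rw [div_lt_iff₀ hpos] at hn
        have h2 := (bounds (P n) (hD n)).2.2
        have h3 := hc n
        nlinarith
      have hy0 : p.2 = -1 := by
        have h := hu0
        simp only [uP, hx0] at h
        norm_num at h
        linarith
      exact Prod.ext_iff.mpr ⟨hx0, hy0⟩
    · push_neg at hcase
      obtain ⟨k, hk⟩ := hcase
      have hgrow : ∀ n, 2 ^ n * phiP (P k) ≤ phiP (P (k + n)) := by
        intro n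
        induction n with
        | zero => simp
        | succ n ih =>
          have hpos : 0 < phiP (P (k + n)) := by
            have : (0:ℝ) < 2 ^ n * phiP (P k) := by positivity
            linarith
          have hstep := stepA (P (k + n)) (hD (k + n))
            (by rw [← hPs]; exact hD (k + n + 1)) hpos.le
          have : P (k + (n + 1)) = pdTraceMap (P (k + n)) := hPs (k + n)
          rw [this]
          calc 2 ^ (n + 1) * phiP (P k) = 2 * (2 ^ n * phiP (P k)) := by ring
            _ ≤ 2 * phiP (P (k + n)) := by linarith
            _ ≤ phiP (pdTraceMap (P (k + n))) := hstep
      obtain ⟨n, hn⟩ := pow_unbounded_of_one_lt (2 / phiP (P k)) (by norm_num : (1:ℝ) < 2)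
      rw [div_lt_iff₀ hk] at hn
      have h2 := (bounds (P (k + n)) (hD (k + n))).1
      have h3 := hgrow n
      nlinarith
  · intro h
    subst h
    intro n
    have hfix : pdTraceMap (-1, -1) = (-1, -1) := by
      simp only [pdTraceMap]
      norm_num
    rw [Function.iterate_fixed hfix]
    exact hp
end

section
/- Let B_∞ := {E ∈ ℝ : the sequence (h_n(E)) is bounded}. Then every zero of every h_n lies in B_∞; that is, ⋃_n Z_n ⊆ B_∞, where Z_n = {E : h_n(E) = 0}. -/
/-- Every zero of a trace polynomial has bounded trace orbit,
i.e. `⋃ n Z_n ⊆ B_∞`. -/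
theorem pd_zeros_have_bounded_orbit (lam : ℝ) (h : ℕ → ℝ → ℝ)
    (h0 : ∀ E, h 0 E = E - lam)
    (h1 : ∀ E, h 1 E = E ^ 2 - lam ^ 2 - 2)
    (hrec : ∀ n : ℕ, ∀ E, h (n + 2) E = h (n + 1) E * ((h n E) ^ 2 - 2) - 2) :
    ∀ (n : ℕ) (E : ℝ), h n E = 0 → ∃ C : ℝ, ∀ k : ℕ, |h k E| ≤ C := by
  intro n E hE
  -- Step 1: h (n+1) E = -2
  have ha : h (n + 1) E = -2 := by
    cases n with
    | zero =>
      have e0 := h0 E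
      have e1 := h1 E
      rw [hE] at e0
      have hEl : E = lam := by linarith
      show h 1 E = -2
      rw [e1, hEl]; ring
    | succ m =>
      rw [hrec m E, hE]; ring
  -- Step 2: h (n+2) E = 2
  have hb : h (n + 2) E = 2 := by
    rw [hrec n E, ha, hE]; ring
  -- Step 3: h (n+3) E = 2
  have hc : h (n + 3) E = 2 := by
    have e : n + 3 = n + 1 + 2 := by omega
    rw [e, hrec (n + 1) E, hb, ha]; ring
  -- Step 4: for all k ≥ n+2, h k E = 2
  have htail : ∀ k, n + 2 ≤ k → h k E = 2 ∧ h (k + 1) E = 2 := by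
    intro k hk
    induction k, hk using Nat.le_induction with
    | base => exact ⟨hb, hc⟩
    | succ k hk ih =>
      refine ⟨ih.2, ?_⟩
      rw [hrec k E, ih.2, ih.1]; ring
  -- Bound: sum of initial terms plus 2
  refine ⟨(∑ j ∈ Finset.range (n + 2), |h j E|) + 2, fun k => ?_⟩
  rcases lt_or_ge k (n + 2) with hk | hk
  · have h1' : |h k E| ≤ ∑ j ∈ Finset.range (n + 2), |h j E| := by
      exact Finset.single_le_sum (f := fun j => |h j E|) (fun j _ => abs_nonneg _) (Finset.mem_range.mpr hk)
    have h2' : (0:ℝ) ≤ 2 := by norm_num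
    linarith
  · have := (htail k hk).1
    rw [this]
    have hsum : (0:ℝ) ≤ ∑ j ∈ Finset.range (n + 2), |h j E| :=
      Finset.sum_nonneg fun j _ => abs_nonneg (h j E)
    rw [abs_of_nonneg (by norm_num : (0:ℝ) ≤ 2)]
    linarith
end

section
/- Let 𝓘 = {𝓘_n : n ≥ 0} be a separating nested structure of compact nondegenerate intervals on ℝ satisfying: (i) there exist λ ∈ (0,1) and C > 0 with |I| ≥ Cλ^n for all I ∈ 𝓘_n; (ii) there exists C' > 0 such that for all n, k and all I, I' ∈ 𝓘_n, (#{J ∈ 𝓘_{n+k} : J ⊆ I}) / (#{J ∈ 𝓘_{n+k} : J ⊆ I'}) ≤ C'. Then the Hausdorff dimension of the limit set A(𝓘) = ⋂_n ⋃_{I ∈ 𝓘_n} I is at least liminf_{n→∞} (log #𝓘_n)/(-n log λ). -/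
open scoped Classical

open scoped ENNReal NNReal
open MeasureTheory

namespace SNSAux

variable {I : ℕ → Finset (ℝ × ℝ)}

lemma anc_exists' (hnest : ∀ n, ∀ p ∈ I (n + 1),
      ∃! q, q ∈ I n ∧ Set.Icc p.1 p.2 ⊆ Set.Icc q.1 q.2)
    {m n : ℕ} (hmn : m ≤ n) :
    ∀ p ∈ I n, ∃ q, q ∈ I m ∧ Set.Icc p.1 p.2 ⊆ Set.Icc q.1 q.2 := by
  obtain ⟨k, rfl⟩ := Nat.exists_eq_add_of_le hmn
  clear hmn
  induction k with
  | zero => exact fun p hp => ⟨p, hp, subset_rfl⟩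
  | succ k ih =>
    intro p hp
    obtain ⟨q, ⟨hq, hsub⟩, -⟩ := hnest (m + k) p hp
    obtain ⟨r, hr, hsub'⟩ := ih q hq
    exact ⟨r, hr, hsub.trans hsub'⟩

lemma anc_unique (hint : ∀ n, ∀ p ∈ I n, p.1 < p.2)
    (hsep : ∀ n, ∀ p ∈ I n, ∀ q ∈ I n, p ≠ q →
      Disjoint (Set.Icc p.1 p.2) (Set.Icc q.1 q.2))
    {m n : ℕ} {p q q' : ℝ × ℝ} (hp : p ∈ I n) (hq : q ∈ I m) (hq' : q' ∈ I m)
    (h1 : Set.Icc p.1 p.2 ⊆ Set.Icc q.1 q.2)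
    (h2 : Set.Icc p.1 p.2 ⊆ Set.Icc q'.1 q'.2) : q = q' := by
  by_contra hne
  have hd := hsep m q hq q' hq' hne
  have hx : p.1 ∈ Set.Icc p.1 p.2 := Set.left_mem_Icc.2 (hint n p hp).le
  exact (Set.disjoint_left.1 hd (h1 hx)) (h2 hx)

lemma card_partition (hint : ∀ n, ∀ p ∈ I n, p.1 < p.2)
    (hnest : ∀ n, ∀ p ∈ I (n + 1),
      ∃! q, q ∈ I n ∧ Set.Icc p.1 p.2 ⊆ Set.Icc q.1 q.2)
    (hsep : ∀ n, ∀ p ∈ I n, ∀ q ∈ I n, p ≠ q →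
      Disjoint (Set.Icc p.1 p.2) (Set.Icc q.1 q.2))
    {m n : ℕ} (hmn : m ≤ n) :
    ∑ q ∈ I m, ((I n).filter fun r => Set.Icc r.1 r.2 ⊆ Set.Icc q.1 q.2).card
      = (I n).card := by
  choose! f hf1 hf2 using anc_exists' hnest hmn
  rw [Finset.card_eq_sum_card_fiberwise (f := f) (fun p hp => hf1 p hp)]
  refine Finset.sum_congr rfl fun q hq => ?_
  congr 1
  apply Finset.filter_congr
  intro r hr
  constructor
  · intro hsub
    exact anc_unique hint hsep hr (hf1 r hr) hq (hf2 r hr) hsub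
  · rintro rfl
    exact hf2 r hr

lemma desc_le {C' : ℝ}
    (hint : ∀ n, ∀ p ∈ I n, p.1 < p.2)
    (hnest : ∀ n, ∀ p ∈ I (n + 1),
      ∃! q, q ∈ I n ∧ Set.Icc p.1 p.2 ⊆ Set.Icc q.1 q.2)
    (hsep : ∀ n, ∀ p ∈ I n, ∀ q ∈ I n, p ≠ q →
      Disjoint (Set.Icc p.1 p.2) (Set.Icc q.1 q.2))
    (hratio : ∀ n k : ℕ, ∀ p ∈ I n, ∀ q ∈ I n,
      (((I (n + k)).filter fun r => Set.Icc r.1 r.2 ⊆ Set.Icc p.1 p.2).card : ℝ)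
        ≤ C' * (((I (n + k)).filter fun r =>
            Set.Icc r.1 r.2 ⊆ Set.Icc q.1 q.2).card : ℝ))
    {m n : ℕ} (hmn : m ≤ n) {q : ℝ × ℝ} (hq : q ∈ I m) :
    (((I n).filter fun r => Set.Icc r.1 r.2 ⊆ Set.Icc q.1 q.2).card : ℝ) * (I m).card
      ≤ C' * (I n).card := by
  obtain ⟨k, rfl⟩ := Nat.exists_eq_add_of_le hmn
  have key : ∀ q' ∈ I m,
      (((I (m + k)).filter fun r => Set.Icc r.1 r.2 ⊆ Set.Icc q.1 q.2).card : ℝ)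
        ≤ C' * (((I (m + k)).filter fun r => Set.Icc r.1 r.2 ⊆ Set.Icc q'.1 q'.2).card : ℝ) :=
    fun q' hq' => hratio m k q hq q' hq'
  have hsum : ∑ q' ∈ I m,
      (((I (m + k)).filter fun r => Set.Icc r.1 r.2 ⊆ Set.Icc q'.1 q'.2).card : ℝ)
      = ((I (m + k)).card : ℝ) := by
    rw [← card_partition hint hnest hsep hmn]
    push_cast
    rfl
  calc (((I (m + k)).filter fun r => Set.Icc r.1 r.2 ⊆ Set.Icc q.1 q.2).card : ℝ) * (I m).card
      = ∑ _q' ∈ I m, (((I (m + k)).filter fun r =>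
          Set.Icc r.1 r.2 ⊆ Set.Icc q.1 q.2).card : ℝ) := by
        rw [Finset.sum_const, nsmul_eq_mul, mul_comm]
    _ ≤ ∑ q' ∈ I m, C' * (((I (m + k)).filter fun r =>
          Set.Icc r.1 r.2 ⊆ Set.Icc q'.1 q'.2).card : ℝ) :=
        Finset.sum_le_sum key
    _ = C' * (I (m + k)).card := by rw [← Finset.mul_sum, hsum]

lemma exists_mem_limit (hint : ∀ n, ∀ p ∈ I n, p.1 < p.2)
    (hnest : ∀ n, ∀ p ∈ I (n + 1),
      ∃! q, q ∈ I n ∧ Set.Icc p.1 p.2 ⊆ Set.Icc q.1 q.2)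
    (hmin : ∀ n, ∀ q ∈ I n, ∃ p ∈ I (n + 1), Set.Icc p.1 p.2 ⊆ Set.Icc q.1 q.2)
    {N : ℕ} {p : ℝ × ℝ} (hp : p ∈ I N) :
    ∃ x ∈ Set.Icc p.1 p.2, x ∈ ⋂ n, ⋃ q ∈ I n, Set.Icc q.1 q.2 := by
  have step : ∀ n (q : ℝ × ℝ), ∃ r : ℝ × ℝ, q ∈ I n →
      r ∈ I (n + 1) ∧ Set.Icc r.1 r.2 ⊆ Set.Icc q.1 q.2 := by
    intro n q
    by_cases h : q ∈ I n
    · obtain ⟨r, hr, hsub⟩ := hmin n q h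
      exact ⟨r, fun _ => ⟨hr, hsub⟩⟩
    · exact ⟨q, fun h' => absurd h' h⟩
  choose nxt hnxt using step
  set c : ℕ → ℝ × ℝ := fun k => Nat.rec p (fun k q => nxt (N + k) q) k with hc
  have hmem : ∀ k, c k ∈ I (N + k) := by
    intro k; induction k with
    | zero => exact hp
    | succ k ih => exact (hnxt (N + k) (c k) ih).1
  have hsub : ∀ k, Set.Icc (c (k+1)).1 (c (k+1)).2 ⊆ Set.Icc (c k).1 (c k).2 :=
    fun k => (hnxt (N + k) (c k) (hmem k)).2
  have hle : ∀ k, (c k).1 ≤ (c k).2 := fun k => (hint _ _ (hmem k)).le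
  have hstep : ∀ k, (c k).1 ≤ (c (k+1)).1 ∧ (c (k+1)).2 ≤ (c k).2 := by
    intro k
    have := (Set.Icc_subset_Icc_iff (hle (k+1))).1 (hsub k)
    exact ⟨this.1, this.2⟩
  have mono1 : Monotone fun k => (c k).1 := monotone_nat_of_le_succ fun k => (hstep k).1
  have mono2 : Antitone fun k => (c k).2 := antitone_nat_of_succ_le fun k => (hstep k).2
  have key : ∀ j k : ℕ, (c k).1 ≤ (c j).2 := by
    intro j k
    rcases le_total k j with h | h
    · exact (mono1 h).trans (hle j)
    · exact (hle k).trans (mono2 h)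
  have bdd : BddAbove (Set.range fun k => (c k).1) := by
    refine ⟨(c 0).2, ?_⟩
    rintro _ ⟨k, rfl⟩
    exact key 0 k
  set x := ⨆ k, (c k).1 with hx
  have hx1 : ∀ k, (c k).1 ≤ x := fun k => le_ciSup bdd k
  have hx2 : ∀ k, x ≤ (c k).2 := fun k => ciSup_le fun j => key k j
  have hxmem : ∀ k, x ∈ Set.Icc (c k).1 (c k).2 := fun k => ⟨hx1 k, hx2 k⟩
  have hc0 : c 0 = p := rfl
  refine ⟨x, by rw [← hc0]; exact hxmem 0, ?_⟩
  rw [Set.mem_iInter]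
  intro n
  rcases le_total N n with h | h
  · obtain ⟨k, rfl⟩ := Nat.exists_eq_add_of_le h
    exact Set.mem_biUnion (hmem k) (hxmem k)
  · obtain ⟨q, hq, hsubq⟩ := anc_exists' hnest h p hp
    exact Set.mem_biUnion hq (hsubq (by rw [← hc0]; exact hxmem 0))

lemma count_meets {lam C : ℝ} (hlam0 : 0 < lam) (hC : 0 < C)
    (hsep : ∀ n, ∀ p ∈ I n, ∀ q ∈ I n, p ≠ q →
      Disjoint (Set.Icc p.1 p.2) (Set.Icc q.1 q.2))
    (hlen : ∀ n, ∀ p ∈ I n, C * lam ^ n ≤ p.2 - p.1)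
    {n : ℕ} {a b : ℝ} (hab : a ≤ b) :
    ((((I n).filter fun J => (Set.Icc J.1 J.2 ∩ Set.Icc a b).Nonempty).card : ℝ))
        * (C * lam ^ n / 2) ≤ (b - a) + C * lam ^ n := by
  set ℓ : ℝ := C * lam ^ n with hℓ
  have hℓpos : 0 < ℓ := by positivity
  set S := (I n).filter fun J => (Set.Icc J.1 J.2 ∩ Set.Icc a b).Nonempty with hS
  set E : ℝ × ℝ → Set ℝ := fun J => Set.Icc J.1 J.2 ∩ Set.Icc (a - ℓ/2) (b + ℓ/2) with hE
  have claim1 : ∀ J ∈ S, ENNReal.ofReal (ℓ/2) ≤ volume (E J) := by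
    intro J hJ
    rw [hS, Finset.mem_filter] at hJ
    obtain ⟨hJI, x, hx1, hx2⟩ := hJ
    have hxa : a ≤ x := hx2.1
    have hxb : x ≤ b := hx2.2
    have hJ1 : J.1 ≤ x := hx1.1
    have hJ2 : x ≤ J.2 := hx1.2
    have hJlen : ℓ ≤ J.2 - J.1 := hlen n J hJI
    rcases le_or_gt (ℓ/2) (x - J.1) with h | h
    · have hincl : Set.Icc (x - ℓ/2) x ⊆ E J := by
        intro y hy
        exact ⟨⟨by linarith [hy.1], by linarith [hy.2]⟩,
               ⟨by linarith [hy.1], by linarith [hy.2]⟩⟩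
      calc ENNReal.ofReal (ℓ/2) = volume (Set.Icc (x - ℓ/2) x) := by
            rw [Real.volume_Icc]; congr 1; ring
        _ ≤ volume (E J) := measure_mono hincl
    · have h2 : ℓ/2 ≤ J.2 - x := by linarith
      have hincl : Set.Icc x (x + ℓ/2) ⊆ E J := by
        intro y hy
        exact ⟨⟨by linarith [hy.1], by linarith [hy.2]⟩,
               ⟨by linarith [hy.1], by linarith [hy.2]⟩⟩
      calc ENNReal.ofReal (ℓ/2) = volume (Set.Icc x (x + ℓ/2)) := by
            rw [Real.volume_Icc]; congr 1; ring
        _ ≤ volume (E J) := measure_mono hincl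
  have claim2 : Set.PairwiseDisjoint (↑S) E := by
    intro J hJ K hK hne
    have hJI : J ∈ I n := Finset.mem_filter.1 (by exact_mod_cast hJ) |>.1
    have hKI : K ∈ I n := Finset.mem_filter.1 (by exact_mod_cast hK) |>.1
    exact (hsep n J hJI K hKI hne).mono Set.inter_subset_left Set.inter_subset_left
  have hmeas : volume (⋃ J ∈ S, E J) = ∑ J ∈ S, volume (E J) :=
    measure_biUnion_finset claim2 fun J _ => measurableSet_Icc.inter measurableSet_Icc
  have hsum : (S.card : ℝ≥0∞) * ENNReal.ofReal (ℓ/2) ≤ ENNReal.ofReal ((b - a) + ℓ) := by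
    calc (S.card : ℝ≥0∞) * ENNReal.ofReal (ℓ/2) = S.card • ENNReal.ofReal (ℓ/2) := by
          rw [nsmul_eq_mul]
      _ ≤ ∑ J ∈ S, volume (E J) := Finset.card_nsmul_le_sum S _ _ claim1
      _ = volume (⋃ J ∈ S, E J) := hmeas.symm
      _ ≤ volume (Set.Icc (a - ℓ/2) (b + ℓ/2)) := by
          apply measure_mono
          exact Set.iUnion₂_subset fun J _ => Set.inter_subset_right
      _ = ENNReal.ofReal ((b - a) + ℓ) := by rw [Real.volume_Icc]; congr 1; ring
  have := hsum
  rw [← ENNReal.ofReal_natCast S.card, ← ENNReal.ofReal_mul (by positivity)] at this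
  exact (ENNReal.ofReal_le_ofReal_iff (by linarith)).1 this

lemma rpow_two_mul_add {a b d : ℝ} (ha : 0 ≤ a) (hb : 0 ≤ b) (hd : 0 < d) :
    (2 * (a + b)) ^ d ≤ 4 ^ d * (a ^ d + b ^ d) := by
  have h1 : 2 * (a + b) ≤ 4 * max a b := by
    rcases le_total a b with h | h
    · rw [max_eq_right h]; linarith
    · rw [max_eq_left h]; linarith
  have hmax : 0 ≤ max a b := le_max_of_le_left ha
  calc (2 * (a + b)) ^ d ≤ (4 * max a b) ^ d :=
        Real.rpow_le_rpow (by positivity) h1 hd.le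
    _ = 4 ^ d * (max a b) ^ d := Real.mul_rpow (by norm_num) hmax
    _ ≤ 4 ^ d * (a ^ d + b ^ d) := by
        apply mul_le_mul_of_nonneg_left _ (by positivity)
        rcases le_total a b with h | h
        · rw [max_eq_right h]
          nlinarith [Real.rpow_nonneg ha d]
        · rw [max_eq_left h]
          nlinarith [Real.rpow_nonneg hb d]

lemma geom_rpow_sum {d : ℝ} (hd : 0 < d) (F : Finset ℕ) :
    ∑ i ∈ F, (((2:ℝ)⁻¹) ^ i) ^ d ≤ (1 - (2⁻¹:ℝ) ^ d)⁻¹ := by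
  set ρ : ℝ := (2⁻¹:ℝ) ^ d with hρ
  have hρ0 : 0 ≤ ρ := Real.rpow_nonneg (by norm_num) d
  have hρ1 : ρ < 1 := Real.rpow_lt_one (by norm_num) (by norm_num) hd
  have hconv : ∀ i : ℕ, (((2:ℝ)⁻¹) ^ i) ^ d = ρ ^ i := by
    intro i
    rw [← Real.rpow_natCast ((2:ℝ)⁻¹) i, ← Real.rpow_mul (by norm_num), mul_comm,
      Real.rpow_mul (by norm_num), Real.rpow_natCast]
  calc ∑ i ∈ F, (((2:ℝ)⁻¹) ^ i) ^ d = ∑ i ∈ F, ρ ^ i := by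
        exact Finset.sum_congr rfl fun i _ => hconv i
    _ ≤ ∑' i : ℕ, ρ ^ i :=
        Summable.sum_le_tsum F (fun i _ => pow_nonneg hρ0 i) (summable_geometric_of_lt_one hρ0 hρ1)
    _ = (1 - ρ)⁻¹ := tsum_geometric_of_lt_one hρ0 hρ1

noncomputable def nlevel (lam C t : ℝ) : ℕ :=
  if h : ∃ n : ℕ, C * lam ^ n ≤ t then Nat.find h else 0

lemma nlevel_exists {lam C t : ℝ} (hlam0 : 0 < lam) (hlam1 : lam < 1) (hC : 0 < C)
    (ht : 0 < t) : ∃ n : ℕ, C * lam ^ n ≤ t := by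
  obtain ⟨n, hn⟩ := exists_pow_lt_of_lt_one (x := t / C) (by positivity) hlam1
  exact ⟨n, by rw [mul_comm]; exact (le_div_iff₀ hC).1 hn.le⟩

lemma nlevel_spec {lam C t : ℝ} (hlam0 : 0 < lam) (hlam1 : lam < 1) (hC : 0 < C)
    (ht : 0 < t) : C * lam ^ (nlevel lam C t) ≤ t := by
  rw [nlevel, dif_pos (nlevel_exists hlam0 hlam1 hC ht)]
  exact Nat.find_spec (nlevel_exists hlam0 hlam1 hC ht)

lemma nlevel_min {lam C t : ℝ} (hlam0 : 0 < lam) (hlam1 : lam < 1) (hC : 0 < C)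
    (ht : 0 < t) {m : ℕ} (hm : m < nlevel lam C t) : t < C * lam ^ m := by
  have h := nlevel_exists hlam0 hlam1 hC ht
  rw [nlevel, dif_pos h] at hm
  have := Nat.find_min h hm
  linarith [not_le.1 this]

lemma nlevel_gt {lam C t : ℝ} (hlam0 : 0 < lam) (hlam1 : lam < 1) (hC : 0 < C)
    (ht : 0 < t) {n₁ : ℕ} (hsmall : t < C * lam ^ n₁) : n₁ < nlevel lam C t := by
  by_contra h
  push_neg at h
  have h1 := nlevel_spec hlam0 hlam1 hC ht
  have h2 : lam ^ n₁ ≤ lam ^ (nlevel lam C t) :=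
    pow_le_pow_of_le_one hlam0.le hlam1.le h
  nlinarith

lemma count_meets_N {lam C C' : ℝ} (hlam0 : 0 < lam) (hlam1 : lam < 1) (hC : 0 < C)
    (hC' : 0 < C')
    (hne : ∀ n, (I n).Nonempty)
    (hint : ∀ n, ∀ p ∈ I n, p.1 < p.2)
    (hnest : ∀ n, ∀ p ∈ I (n + 1),
      ∃! q, q ∈ I n ∧ Set.Icc p.1 p.2 ⊆ Set.Icc q.1 q.2)
    (hsep : ∀ n, ∀ p ∈ I n, ∀ q ∈ I n, p ≠ q →
      Disjoint (Set.Icc p.1 p.2) (Set.Icc q.1 q.2))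
    (hlen : ∀ n, ∀ p ∈ I n, C * lam ^ n ≤ p.2 - p.1)
    (hratio : ∀ n k : ℕ, ∀ p ∈ I n, ∀ q ∈ I n,
      (((I (n + k)).filter fun r => Set.Icc r.1 r.2 ⊆ Set.Icc p.1 p.2).card : ℝ)
        ≤ C' * (((I (n + k)).filter fun r =>
            Set.Icc r.1 r.2 ⊆ Set.Icc q.1 q.2).card : ℝ))
    {d : ℝ} (hd : 0 < d) {n₁ : ℕ}
    (hcard : ∀ n, n₁ ≤ n → (1 : ℝ) / (I n).card ≤ (lam ^ n) ^ d)
    {a b : ℝ} (hab : a < b) (hsmall : b - a < C * lam ^ n₁)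
    {N : ℕ} (hN : nlevel lam C (b - a) ≤ N) :
    (((I N).filter fun J => (Set.Icc J.1 J.2 ∩ Set.Icc a b).Nonempty).card : ℝ)
      ≤ (2 / lam + 2) * C' * ((b - a) / C) ^ d * (I N).card := by
  set t : ℝ := b - a with htdef
  have ht : 0 < t := by simp [htdef]; linarith
  set n : ℕ := nlevel lam C t with hndef
  have hn1 : C * lam ^ n ≤ t := nlevel_spec hlam0 hlam1 hC ht
  have hgt : n₁ < n := nlevel_gt hlam0 hlam1 hC ht hsmall
  have hn_pos : 1 ≤ n := Nat.one_le_iff_ne_zero.2 (by omega)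
  have hminim : t < C * lam ^ (n - 1) := nlevel_min hlam0 hlam1 hC ht (by omega)
  -- card of level-n intervals meeting [a,b] is at most 2/lam + 2
  set S := (I n).filter fun J => (Set.Icc J.1 J.2 ∩ Set.Icc a b).Nonempty with hSdef
  have hSbound : (S.card : ℝ) ≤ 2 / lam + 2 := by
    have h1 := count_meets hlam0 hC hsep hlen (n := n) hab.le
    have hpow : 0 < C * lam ^ n := by positivity
    -- t * lam ≤ C * lam ^ n  from minimality
    have h2 : t * lam ≤ C * lam ^ n := by
      have : lam ^ n = lam ^ (n - 1) * lam := by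
        rw [← pow_succ]; congr 1; omega
      rw [this]
      nlinarith
    rw [div_add' _ _ _ (ne_of_gt hlam0)]
    rw [le_div_iff₀ hlam0]
    have h3 : (S.card : ℝ) * (C * lam ^ n / 2) ≤ t + C * lam ^ n := h1
    -- multiply h3 through
    nlinarith [h3, hpow, hlam0]
  -- every deep interval meeting [a,b] lies below some member of S
  have hsub : (I N).filter (fun J => (Set.Icc J.1 J.2 ∩ Set.Icc a b).Nonempty)
      ⊆ S.biUnion fun K => (I N).filter fun r => Set.Icc r.1 r.2 ⊆ Set.Icc K.1 K.2 := by
    intro J hJ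
    rw [Finset.mem_filter] at hJ
    obtain ⟨hJI, x, hx1, hx2⟩ := hJ
    obtain ⟨K, hK, hsubK⟩ := anc_exists' hnest hN J hJI
    rw [Finset.mem_biUnion]
    refine ⟨K, ?_, Finset.mem_filter.2 ⟨hJI, hsubK⟩⟩
    rw [hSdef, Finset.mem_filter]
    exact ⟨hK, x, hsubK hx1, hx2⟩
  have hdesc : ∀ K ∈ S,
      ((((I N).filter fun r => Set.Icc r.1 r.2 ⊆ Set.Icc K.1 K.2).card : ℝ))
        ≤ C' * ((t / C) ^ d) * (I N).card := by
    intro K hK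
    have hKI : K ∈ I n := (Finset.mem_filter.1 hK).1
    have h1 := desc_le hint hnest hsep hratio hN hKI
    have hcardn : (0 : ℝ) < (I n).card := by
      exact_mod_cast Finset.card_pos.2 (hne n)
    have h2 : (((I N).filter fun r => Set.Icc r.1 r.2 ⊆ Set.Icc K.1 K.2).card : ℝ)
        ≤ C' * (I N).card * (1 / (I n).card) := by
      rw [mul_one_div, le_div_iff₀ hcardn]
      linarith [h1]
    have h3 : (1 : ℝ) / (I n).card ≤ (lam ^ n) ^ d := hcard n hgt.le
    have h4 : ((lam : ℝ) ^ n) ^ d ≤ (t / C) ^ d := by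
      apply Real.rpow_le_rpow (by positivity) _ hd.le
      rw [le_div_iff₀ hC]
      linarith
    calc (((I N).filter fun r => Set.Icc r.1 r.2 ⊆ Set.Icc K.1 K.2).card : ℝ)
        ≤ C' * (I N).card * (1 / (I n).card) := h2
      _ ≤ C' * (I N).card * ((t / C) ^ d) := by
          apply mul_le_mul_of_nonneg_left (h3.trans h4) (by positivity)
      _ = C' * ((t / C) ^ d) * (I N).card := by ring
  calc (((I N).filter fun J => (Set.Icc J.1 J.2 ∩ Set.Icc a b).Nonempty).card : ℝ)
      ≤ ((S.biUnion fun K => (I N).filter fun r =>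
          Set.Icc r.1 r.2 ⊆ Set.Icc K.1 K.2).card : ℝ) := by
        exact_mod_cast Finset.card_le_card hsub
    _ ≤ ∑ K ∈ S, (((I N).filter fun r => Set.Icc r.1 r.2 ⊆ Set.Icc K.1 K.2).card : ℝ) := by
        exact_mod_cast Finset.card_biUnion_le
    _ ≤ ∑ _K ∈ S, C' * ((t / C) ^ d) * (I N).card := Finset.sum_le_sum hdesc
    _ = (S.card : ℝ) * (C' * ((t / C) ^ d) * (I N).card) := by
        rw [Finset.sum_const, nsmul_eq_mul]
    _ ≤ (2 / lam + 2) * (C' * ((t / C) ^ d) * (I N).card) := by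
        apply mul_le_mul_of_nonneg_right hSbound (by positivity)
    _ = (2 / lam + 2) * C' * ((t / C) ^ d) * (I N).card := by ring

lemma cover_bound {lam C C' : ℝ} (hlam0 : 0 < lam) (hlam1 : lam < 1) (hC : 0 < C)
    (hC' : 0 < C')
    (hne : ∀ n, (I n).Nonempty)
    (hint : ∀ n, ∀ p ∈ I n, p.1 < p.2)
    (hnest : ∀ n, ∀ p ∈ I (n + 1),
      ∃! q, q ∈ I n ∧ Set.Icc p.1 p.2 ⊆ Set.Icc q.1 q.2)
    (hmin : ∀ n, ∀ q ∈ I n, ∃ p ∈ I (n + 1), Set.Icc p.1 p.2 ⊆ Set.Icc q.1 q.2)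
    (hsep : ∀ n, ∀ p ∈ I n, ∀ q ∈ I n, p ≠ q →
      Disjoint (Set.Icc p.1 p.2) (Set.Icc q.1 q.2))
    (hlen : ∀ n, ∀ p ∈ I n, C * lam ^ n ≤ p.2 - p.1)
    (hratio : ∀ n k : ℕ, ∀ p ∈ I n, ∀ q ∈ I n,
      (((I (n + k)).filter fun r => Set.Icc r.1 r.2 ⊆ Set.Icc p.1 p.2).card : ℝ)
        ≤ C' * (((I (n + k)).filter fun r =>
            Set.Icc r.1 r.2 ⊆ Set.Icc q.1 q.2).card : ℝ))
    {d : ℝ} (hd : 0 < d) {n₁ : ℕ}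
    (hcard : ∀ n, n₁ ≤ n → (1 : ℝ) / (I n).card ≤ (lam ^ n) ^ d)
    (t : ℕ → Set ℝ)
    (hcov : (⋂ n, ⋃ q ∈ I n, Set.Icc q.1 q.2) ⊆ ⋃ i, t i)
    (hdiam : ∀ i, EMetric.diam (t i) ≤ ENNReal.ofReal (C * lam ^ n₁ / 8)) :
    ENNReal.ofReal (1 / ((2 / lam + 2) * C' * 4 ^ d / C ^ d))
      ≤ ∑' i, ⨆ _ : (t i).Nonempty, EMetric.diam (t i) ^ d := by
  set K0 : ℝ := (2 / lam + 2) * C' * 4 ^ d / C ^ d with hK0def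
  have hCd : (0:ℝ) < C ^ d := Real.rpow_pos_of_pos hC d
  have h4d : (0:ℝ) < 4 ^ d := Real.rpow_pos_of_pos (by norm_num) d
  have hK0 : 0 < K0 := by
    apply div_pos _ hCd
    apply mul_pos _ h4d
    apply mul_pos _ hC'
    have : 0 < 2 / lam := by positivity
    linarith
  set G0 : ℝ := (1 - (2⁻¹:ℝ) ^ d)⁻¹ with hG0def
  have hρ1 : (2⁻¹:ℝ) ^ d < 1 := Real.rpow_lt_one (by norm_num) (by norm_num) hd
  have hG0 : 0 < G0 := by
    rw [hG0def]
    apply inv_pos.2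
    linarith
  set r₀ : ℝ := C * lam ^ n₁ / 8 with hr₀def
  have hr₀ : 0 < r₀ := by positivity
  apply ENNReal.le_of_forall_pos_le_add
  intro ε hε _
  have hεR : (0:ℝ) < (ε:ℝ) := by exact_mod_cast hε
  -- choose δ
  set δ : ℝ := min r₀ (((ε:ℝ) / G0) ^ (1/d)) with hδdef
  have hδpos : 0 < δ := by
    apply lt_min hr₀
    apply Real.rpow_pos_of_pos (by positivity)
  have hδr₀ : δ ≤ r₀ := min_le_left _ _
  have hδd : δ ^ d * G0 ≤ (ε:ℝ) := by
    have h1 : δ ^ d ≤ (((ε:ℝ) / G0) ^ (1/d)) ^ d :=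
      Real.rpow_le_rpow hδpos.le (min_le_right _ _) hd.le
    have h2 : (((ε:ℝ) / G0) ^ (1/d)) ^ d = (ε:ℝ) / G0 := by
      rw [← Real.rpow_mul (by positivity), one_div, inv_mul_cancel₀ hd.ne', Real.rpow_one]
    rw [h2] at h1
    calc δ ^ d * G0 ≤ ((ε:ℝ) / G0) * G0 := mul_le_mul_of_nonneg_right h1 hG0.le
      _ = (ε:ℝ) := div_mul_cancel₀ _ hG0.ne'
  -- diameters
  set D : ℕ → ℝ := fun i => Metric.diam (t i) with hDdef
  have hD0 : ∀ i, 0 ≤ D i := fun i => Metric.diam_nonneg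
  have hDr₀ : ∀ i, D i ≤ r₀ := by
    intro i
    exact ENNReal.toReal_le_of_le_ofReal hr₀.le (hdiam i)
  have hDne : ∀ i, EMetric.diam (t i) ≠ ⊤ :=
    fun i => ((hdiam i).trans_lt ENNReal.ofReal_lt_top).ne
  set δ' : ℕ → ℝ := fun i => δ * (2⁻¹:ℝ) ^ i with hδ'def
  have hδ'pos : ∀ i, 0 < δ' i := fun i => by positivity
  have hδ'le : ∀ i, δ' i ≤ δ := by
    intro i
    rw [hδ'def]
    calc δ * (2⁻¹:ℝ) ^ i ≤ δ * 1 := by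
          apply mul_le_mul_of_nonneg_left _ hδpos.le
          exact pow_le_one₀ (by norm_num) (by norm_num)
      _ = δ := mul_one δ
  -- the enlarged open sets
  set c : ℕ → ℝ := fun i => if h : (t i).Nonempty then h.some else 0 with hcdef
  set V : ℕ → Set ℝ := fun i =>
    if (t i).Nonempty then Set.Ioo (c i - (D i + δ' i)) (c i + (D i + δ' i)) else ∅ with hVdef
  have hVopen : ∀ i, IsOpen (V i) := by
    intro i
    simp only [hVdef]
    split
    · exact isOpen_Ioo
    · exact isOpen_empty
  have htV : ∀ i, t i ⊆ V i := by
    intro i y hy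
    have hne' : (t i).Nonempty := ⟨y, hy⟩
    have hbdd : Bornology.IsBounded (t i) := Metric.isBounded_iff_ediam_ne_top.2 (hDne i)
    have hdist : dist y (c i) ≤ D i := by
      simp only [hcdef, dif_pos hne', hDdef]
      exact Metric.dist_le_diam_of_mem hbdd hy hne'.some_mem
    rw [Real.dist_eq] at hdist
    have := abs_le.1 hdist
    simp only [hVdef, if_pos hne', Set.mem_Ioo]
    constructor <;> nlinarith [hδ'pos i]
  -- compactness of the limit set
  set A : Set ℝ := ⋂ n, ⋃ q ∈ I n, Set.Icc q.1 q.2 with hAdef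
  have hA0 : A ⊆ ⋃ q ∈ I 0, Set.Icc q.1 q.2 := Set.iInter_subset _ 0
  have hcomp0 : IsCompact (⋃ q ∈ I 0, Set.Icc q.1 q.2) :=
    (I 0).isCompact_biUnion fun q _ => isCompact_Icc
  have hclosed : IsClosed A :=
    isClosed_iInter fun n => isClosed_biUnion_finset fun q _ => isClosed_Icc
  have hcompA : IsCompact A := hcomp0.of_isClosed_subset hclosed hA0
  obtain ⟨F, hF⟩ := hcompA.elim_finite_subcover V hVopen
    (hcov.trans (Set.iUnion_mono htV))
  set F' := F.filter fun i => (t i).Nonempty with hF'def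
  have hAF' : A ⊆ ⋃ i ∈ F', V i := by
    intro x hx
    obtain ⟨i, hiF, hxV⟩ := Set.mem_iUnion₂.1 (hF hx)
    have hne' : (t i).Nonempty := by
      by_contra h
      simp only [hVdef, if_neg h] at hxV
      exact hxV
    exact Set.mem_iUnion₂.2 ⟨i, Finset.mem_filter.2 ⟨hiF, hne'⟩, hxV⟩
  -- the deep level
  set N : ℕ := F'.sup fun i => nlevel lam C (2 * (D i + δ' i)) with hNdef
  -- every interval at level N meets some V i, i ∈ F'
  have hmain : (I N) ⊆ F'.biUnion fun i => (I N).filter fun J =>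
      (Set.Icc J.1 J.2 ∩ Set.Icc (c i - (D i + δ' i)) (c i + (D i + δ' i))).Nonempty := by
    intro J hJ
    obtain ⟨x, hxJ, hxA⟩ := exists_mem_limit hint hnest hmin hJ
    obtain ⟨i, hiF', hxV⟩ := Set.mem_iUnion₂.1 (hAF' hxA)
    have hne' : (t i).Nonempty := (Finset.mem_filter.1 hiF').2
    rw [Finset.mem_biUnion]
    refine ⟨i, hiF', Finset.mem_filter.2 ⟨hJ, x, hxJ, ?_⟩⟩
    simp only [hVdef, if_pos hne'] at hxV
    exact Set.Ioo_subset_Icc_self hxV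
  -- counting
  have hcards : ∀ i ∈ F',
      (((I N).filter fun J => (Set.Icc J.1 J.2 ∩
          Set.Icc (c i - (D i + δ' i)) (c i + (D i + δ' i))).Nonempty).card : ℝ)
        ≤ (2 / lam + 2) * C' * ((2 * (D i + δ' i)) / C) ^ d * (I N).card := by
    intro i hiF'
    have hba : (c i + (D i + δ' i)) - (c i - (D i + δ' i)) = 2 * (D i + δ' i) := by ring
    have hab : c i - (D i + δ' i) < c i + (D i + δ' i) := by
      have := hδ'pos i; have := hD0 i; linarith
    have hsmall : (c i + (D i + δ' i)) - (c i - (D i + δ' i)) < C * lam ^ n₁ := by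
      rw [hba]
      have h1 := hDr₀ i
      have h2 := (hδ'le i).trans hδr₀
      rw [hr₀def] at h1 h2
      have : (0:ℝ) < C * lam ^ n₁ := by positivity
      linarith
    have hNle : nlevel lam C ((c i + (D i + δ' i)) - (c i - (D i + δ' i))) ≤ N := by
      rw [hba, hNdef]
      exact Finset.le_sup (f := fun i => nlevel lam C (2 * (D i + δ' i))) hiF'
    have := count_meets_N hlam0 hlam1 hC hC' hne hint hnest hsep hlen hratio hd hcard
      hab hsmall hNle
    rwa [hba] at this
  have hcardN : (0:ℝ) < (I N).card := by exact_mod_cast Finset.card_pos.2 (hne N)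
  have hsum1 : ((I N).card : ℝ) ≤ ∑ i ∈ F',
      (2 / lam + 2) * C' * ((2 * (D i + δ' i)) / C) ^ d * (I N).card := by
    calc ((I N).card : ℝ)
        ≤ ((F'.biUnion fun i => (I N).filter fun J =>
            (Set.Icc J.1 J.2 ∩ Set.Icc (c i - (D i + δ' i))
              (c i + (D i + δ' i))).Nonempty).card : ℝ) := by
          exact_mod_cast Finset.card_le_card hmain
      _ ≤ ∑ i ∈ F', (((I N).filter fun J =>
            (Set.Icc J.1 J.2 ∩ Set.Icc (c i - (D i + δ' i))
              (c i + (D i + δ' i))).Nonempty).card : ℝ) := by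
          exact_mod_cast Finset.card_biUnion_le
      _ ≤ ∑ i ∈ F', (2 / lam + 2) * C' * ((2 * (D i + δ' i)) / C) ^ d * (I N).card :=
          Finset.sum_le_sum hcards
  -- divide by (I N).card and use the rpow inequality
  have h2 : (1:ℝ) ≤ ∑ i ∈ F', (2 / lam + 2) * C' * ((2 * (D i + δ' i)) / C) ^ d := by
    have h := hsum1
    rw [← Finset.sum_mul] at h
    have h' : (1:ℝ) * ((I N).card : ℝ)
        ≤ (∑ i ∈ F', (2 / lam + 2) * C' * ((2 * (D i + δ' i)) / C) ^ d) * (I N).card := by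
      rw [one_mul]; exact h
    exact le_of_mul_le_mul_right h' hcardN
  have h3 : ∀ i ∈ F', (2 / lam + 2) * C' * ((2 * (D i + δ' i)) / C) ^ d
      ≤ K0 * ((D i) ^ d + (δ' i) ^ d) := by
    intro i _
    have hδ'i := (hδ'pos i).le
    have hDi := hD0 i
    have harg : (0:ℝ) ≤ 2 * (D i + δ' i) := by linarith
    have hdiv : ((2 * (D i + δ' i)) / C) ^ d = (2 * (D i + δ' i)) ^ d / C ^ d :=
      Real.div_rpow harg hC.le d
    have h5 := rpow_two_mul_add hDi hδ'i hd
    have hpos2 : (0:ℝ) ≤ (2 / lam + 2) * C' := by positivity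
    rw [hdiv, hK0def]
    calc (2 / lam + 2) * C' * ((2 * (D i + δ' i)) ^ d / C ^ d)
        ≤ (2 / lam + 2) * C' * (4 ^ d * ((D i) ^ d + (δ' i) ^ d) / C ^ d) := by
          apply mul_le_mul_of_nonneg_left _ hpos2
          exact (div_le_div_iff_of_pos_right hCd).2 h5
      _ = (2 / lam + 2) * C' * 4 ^ d / C ^ d * ((D i) ^ d + (δ' i) ^ d) := by ring
  have h4 : ∑ i ∈ F', (δ' i) ^ d ≤ δ ^ d * G0 := by
    have heq : ∀ i ∈ F', (δ' i) ^ d = δ ^ d * ((((2:ℝ)⁻¹) ^ i) ^ d) := by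
      intro i _
      rw [hδ'def]
      exact Real.mul_rpow hδpos.le (by positivity)
    rw [Finset.sum_congr rfl heq, ← Finset.mul_sum]
    exact mul_le_mul_of_nonneg_left (geom_rpow_sum hd F') (Real.rpow_nonneg hδpos.le d)
  have hkey : 1 ≤ K0 * ((∑ i ∈ F', (D i) ^ d) + δ ^ d * G0) := by
    calc (1:ℝ) ≤ ∑ i ∈ F', (2 / lam + 2) * C' * ((2 * (D i + δ' i)) / C) ^ d := h2
      _ ≤ ∑ i ∈ F', K0 * ((D i) ^ d + (δ' i) ^ d) := Finset.sum_le_sum h3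
      _ = K0 * ((∑ i ∈ F', (D i) ^ d) + ∑ i ∈ F', (δ' i) ^ d) := by
          rw [← Finset.mul_sum, Finset.sum_add_distrib]
      _ ≤ K0 * ((∑ i ∈ F', (D i) ^ d) + δ ^ d * G0) := by
          apply mul_le_mul_of_nonneg_left _ hK0.le
          linarith
  have hreal : 1 / K0 ≤ (∑ i ∈ F', (D i) ^ d) + δ ^ d * G0 := by
    rw [div_le_iff₀ hK0]
    linarith
  have hfin : ∀ i ∈ F',
      ENNReal.ofReal ((D i) ^ d) = ⨆ _ : (t i).Nonempty, EMetric.diam (t i) ^ d := by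
    intro i hi
    have hne' : (t i).Nonempty := (Finset.mem_filter.1 hi).2
    rw [iSup_pos hne', ← ENNReal.ofReal_rpow_of_nonneg (hD0 i) hd.le]
    congr 1
    show ENNReal.ofReal (EMetric.diam (t i)).toReal = EMetric.diam (t i)
    exact ENNReal.ofReal_toReal (hDne i)
  calc ENNReal.ofReal (1 / K0)
      ≤ ENNReal.ofReal ((∑ i ∈ F', (D i) ^ d) + δ ^ d * G0) :=
        ENNReal.ofReal_le_ofReal hreal
    _ ≤ ENNReal.ofReal (∑ i ∈ F', (D i) ^ d) + ENNReal.ofReal (δ ^ d * G0) :=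
        ENNReal.ofReal_add_le
    _ ≤ (∑' i, ⨆ _ : (t i).Nonempty, EMetric.diam (t i) ^ d) + ε := by
        apply add_le_add
        · rw [ENNReal.ofReal_sum_of_nonneg fun i _ => Real.rpow_nonneg (hD0 i) d,
            Finset.sum_congr rfl hfin]
          exact ENNReal.sum_le_tsum F'
        · calc ENNReal.ofReal (δ ^ d * G0) ≤ ENNReal.ofReal ((ε:ℝ)) :=
              ENNReal.ofReal_le_ofReal hδd
            _ = (ε : ℝ≥0∞) := ENNReal.ofReal_coe_nnreal

lemma measure_lower {lam C C' : ℝ} (hlam0 : 0 < lam) (hlam1 : lam < 1) (hC : 0 < C)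
    (hC' : 0 < C')
    (hne : ∀ n, (I n).Nonempty)
    (hint : ∀ n, ∀ p ∈ I n, p.1 < p.2)
    (hnest : ∀ n, ∀ p ∈ I (n + 1),
      ∃! q, q ∈ I n ∧ Set.Icc p.1 p.2 ⊆ Set.Icc q.1 q.2)
    (hmin : ∀ n, ∀ q ∈ I n, ∃ p ∈ I (n + 1), Set.Icc p.1 p.2 ⊆ Set.Icc q.1 q.2)
    (hsep : ∀ n, ∀ p ∈ I n, ∀ q ∈ I n, p ≠ q →
      Disjoint (Set.Icc p.1 p.2) (Set.Icc q.1 q.2))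
    (hlen : ∀ n, ∀ p ∈ I n, C * lam ^ n ≤ p.2 - p.1)
    (hratio : ∀ n k : ℕ, ∀ p ∈ I n, ∀ q ∈ I n,
      (((I (n + k)).filter fun r => Set.Icc r.1 r.2 ⊆ Set.Icc p.1 p.2).card : ℝ)
        ≤ C' * (((I (n + k)).filter fun r =>
            Set.Icc r.1 r.2 ⊆ Set.Icc q.1 q.2).card : ℝ))
    {d : ℝ} (hd : 0 < d) {n₁ : ℕ}
    (hcard : ∀ n, n₁ ≤ n → (1 : ℝ) / (I n).card ≤ (lam ^ n) ^ d) :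
    ENNReal.ofReal (1 / ((2 / lam + 2) * C' * 4 ^ d / C ^ d))
      ≤ μH[d] (⋂ n, ⋃ q ∈ I n, Set.Icc q.1 q.2) := by
  rw [MeasureTheory.Measure.hausdorffMeasure_apply]
  have hr : (0:ℝ≥0∞) < ENNReal.ofReal (C * lam ^ n₁ / 8) :=
    ENNReal.ofReal_pos.2 (by positivity)
  refine le_trans ?_
    (le_iSup₂ (f := fun (r : ℝ≥0∞) (_ : 0 < r) =>
      ⨅ (t : ℕ → Set ℝ) (_ : (⋂ n, ⋃ q ∈ I n, Set.Icc q.1 q.2) ⊆ ⋃ n, t n)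
        (_ : ∀ n, EMetric.diam (t n) ≤ r),
          ∑' n, ⨆ _ : (t n).Nonempty, EMetric.diam (t n) ^ d)
      (ENNReal.ofReal (C * lam ^ n₁ / 8)) hr)
  refine le_iInf fun t => le_iInf fun hcov => le_iInf fun hdiam => ?_
  exact cover_bound hlam0 hlam1 hC hC' hne hint hnest hmin hsep hlen hratio hd hcard
    t hcov hdiam

end SNSAux

/-- Dimension lower bound for the limit set of a separating nested structure
(Proposition 5.5). Intervals are encoded by their endpoint pairs. -/
theorem sns_dimH_lower_bound (I : ℕ → Finset (ℝ × ℝ))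
    (hne : ∀ n, (I n).Nonempty)
    (hint : ∀ n, ∀ p ∈ I n, p.1 < p.2)
    (hopt : ∀ n, ∀ p ∈ I n, ∀ q ∈ I n, p ≠ q →
      ¬ Set.Icc p.1 p.2 ⊆ Set.Icc q.1 q.2)
    (hnest : ∀ n, ∀ p ∈ I (n + 1),
      ∃! q, q ∈ I n ∧ Set.Icc p.1 p.2 ⊆ Set.Icc q.1 q.2)
    (hmin : ∀ n, ∀ q ∈ I n, ∃ p ∈ I (n + 1), Set.Icc p.1 p.2 ⊆ Set.Icc q.1 q.2)
    (hsep : ∀ n, ∀ p ∈ I n, ∀ q ∈ I n, p ≠ q →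
      Disjoint (Set.Icc p.1 p.2) (Set.Icc q.1 q.2))
    (lam C : ℝ) (hlam0 : 0 < lam) (hlam1 : lam < 1) (hC : 0 < C)
    (hlen : ∀ n, ∀ p ∈ I n, C * lam ^ n ≤ p.2 - p.1)
    (C' : ℝ) (hC' : 0 < C')
    (hratio : ∀ n k : ℕ, ∀ p ∈ I n, ∀ q ∈ I n,
      (((I (n + k)).filter fun r => Set.Icc r.1 r.2 ⊆ Set.Icc p.1 p.2).card : ℝ)
        ≤ C' * (((I (n + k)).filter fun r =>
            Set.Icc r.1 r.2 ⊆ Set.Icc q.1 q.2).card : ℝ)) :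
    ENNReal.ofReal
        (Filter.liminf
          (fun n : ℕ => Real.log ((I n).card : ℝ) / (-(n : ℝ) * Real.log lam))
          Filter.atTop)
      ≤ dimH (⋂ n, ⋃ p ∈ I n, Set.Icc p.1 p.2) := by
  classical
  set u : ℕ → ℝ := fun n => Real.log ((I n).card : ℝ) / (-(n : ℝ) * Real.log lam) with hu
  set s : ℝ := Filter.liminf u Filter.atTop with hs
  have hloglam : Real.log lam < 0 := Real.log_neg hlam0 hlam1
  have hcard1 : ∀ n, (1:ℝ) ≤ (I n).card := by
    intro n
    exact_mod_cast Finset.card_pos.2 (hne n)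
  have hu0 : ∀ n, 0 ≤ u n := by
    intro n
    apply div_nonneg
    · exact Real.log_nonneg (hcard1 n)
    · have h1 : (0:ℝ) ≤ (n:ℝ) := Nat.cast_nonneg n
      nlinarith
  rcases le_or_gt s 0 with hs0 | hs0
  · rw [ENNReal.ofReal_eq_zero.2 hs0]
    exact zero_le
  · apply ENNReal.le_of_forall_nnreal_lt
    intro r hr
    have hrs : (r:ℝ) < s := by
      have := (ENNReal.lt_ofReal_iff_toReal_lt ENNReal.coe_ne_top).1 hr
      simpa using this
    have hmaxs : max (r:ℝ) 0 < s := max_lt hrs hs0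
    obtain ⟨d', hd'1, hd'2⟩ := exists_between hmaxs
    obtain ⟨d, hdd', hds⟩ := exists_between hd'2
    have hd'0 : 0 < d' := lt_of_le_of_lt (le_max_right _ _) hd'1
    have hd0 : 0 < d := hd'0.trans hdd'
    -- eventually d < u n
    have hbdd : Filter.IsBoundedUnder (· ≥ ·) Filter.atTop u :=
      ⟨0, Filter.eventually_map.2 (Filter.Eventually.of_forall hu0)⟩
    have hev : ∀ᶠ n in Filter.atTop, d < u n :=
      Filter.eventually_lt_of_lt_liminf hds hbdd
    obtain ⟨n₀, hn₀⟩ := Filter.eventually_atTop.1 hev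
    set n₁ : ℕ := max n₀ 1 with hn₁
    have hcard : ∀ n, n₁ ≤ n → (1:ℝ) / (I n).card ≤ (lam ^ n) ^ d := by
      intro n hn
      have hun : d < u n := hn₀ n (le_trans (le_max_left _ _) hn)
      have hn1 : (1:ℝ) ≤ (n:ℝ) := by
        exact_mod_cast le_trans (le_max_right n₀ 1) hn
      have hdenom : 0 < -(n:ℝ) * Real.log lam := by nlinarith
      have hlog : d * (-(n:ℝ) * Real.log lam) < Real.log ((I n).card : ℝ) :=
        (lt_div_iff₀ hdenom).1 hun
      have hcpos : (0:ℝ) < ((I n).card : ℝ) := lt_of_lt_of_le one_pos (hcard1 n)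
      have hexp : Real.exp (-(((n:ℝ) * Real.log lam) * d)) < ((I n).card : ℝ) := by
        rw [← Real.exp_log hcpos]
        apply Real.exp_lt_exp.2
        nlinarith
      rw [Real.rpow_def_of_pos (pow_pos hlam0 n), Real.log_pow]
      have h2 : (((I n).card : ℝ))⁻¹ ≤ (Real.exp (-(((n:ℝ) * Real.log lam) * d)))⁻¹ :=
        inv_anti₀ (Real.exp_pos _) hexp.le
      rw [Real.exp_neg, inv_inv] at h2
      rw [one_div]
      exact h2
    -- Hausdorff measure bound at exponent d
    have hmeas := SNSAux.measure_lower hlam0 hlam1 hC hC' hne hint hnest hmin hsep hlen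
      hratio hd0 hcard
    have hK0 : (0:ℝ) < 1 / ((2 / lam + 2) * C' * 4 ^ d / C ^ d) := by
      have hCd : (0:ℝ) < C ^ d := Real.rpow_pos_of_pos hC d
      have h4d : (0:ℝ) < (4:ℝ) ^ d := Real.rpow_pos_of_pos (by norm_num) d
      have h2l : (0:ℝ) < 2 / lam + 2 := by positivity
      positivity
    have hμd : μH[d] (⋂ n, ⋃ p ∈ I n, Set.Icc p.1 p.2) ≠ 0 :=
      (lt_of_lt_of_le (ENNReal.ofReal_pos.2 hK0) hmeas).ne'
    have hdich := MeasureTheory.Measure.hausdorffMeasure_zero_or_top hdd'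
      (⋂ n, ⋃ p ∈ I n, Set.Icc p.1 p.2)
    have htop : μH[d'] (⋂ n, ⋃ p ∈ I n, Set.Icc p.1 p.2) = ∞ := hdich.resolve_left hμd
    have hle := le_dimH_of_hausdorffMeasure_eq_top (d := d'.toNNReal)
      (by rwa [Real.coe_toNNReal _ hd'0.le])
    refine le_trans ?_ hle
    rw [ENNReal.coe_le_coe]
    have hrd' : (r:ℝ) ≤ d' := (lt_of_le_of_lt (le_max_left _ _) hd'1).le
    exact (Real.le_toNNReal_iff_coe_le hd'0.le).2 hrd'
end

section
/- If z is a zero of h_n, then h_{n+2}'(z) = -2h_{n+1}'(z), h_{n+3}'(z) = 2h_{n+2}'(z) - 8h_{n+1}'(z), and for k ≥ 4, h_{n+k}'(z) = 2h_{n+k-1}'(z) + 8h_{n+k-2}'(z). Consequently there is an increasing sequence of positive integers τ_k with τ_2 = 2, τ_3 = 12, τ_{k+2} = 2τ_{k+1} + 8τ_k, such that h_{n+k}'(z) = -τ_k · h_{n+1}'(z) for all k ≥ 2. -/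
private def pdTau : ℕ → ℕ
  | 0 => 0
  | 1 => 0
  | 2 => 2
  | 3 => 12
  | (k+4) => 2 * pdTau (k+3) + 8 * pdTau (k+2)

/-- Recursions for the derivatives of the trace polynomials at a zero `z` of
`h n`, and the resulting representation `h_{n+k}'(z) = -τ_k h_{n+1}'(z)` with
an increasing positive integer sequence `τ`. -/
theorem pd_deriv_at_zero (lam : ℝ) (h : ℕ → ℝ → ℝ)
    (h0 : ∀ E, h 0 E = E - lam)
    (h1 : ∀ E, h 1 E = E ^ 2 - lam ^ 2 - 2)
    (hrec : ∀ n : ℕ, ∀ E, h (n + 2) E = h (n + 1) E * ((h n E) ^ 2 - 2) - 2)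
    (n : ℕ) (z : ℝ) (hz : h n z = 0) :
    deriv (h (n + 2)) z = -2 * deriv (h (n + 1)) z ∧
    deriv (h (n + 3)) z = 2 * deriv (h (n + 2)) z - 8 * deriv (h (n + 1)) z ∧
    (∀ k : ℕ, 4 ≤ k →
      deriv (h (n + k)) z
        = 2 * deriv (h (n + (k - 1))) z + 8 * deriv (h (n + (k - 2))) z) ∧
    ∃ τ : ℕ → ℕ, τ 2 = 2 ∧ τ 3 = 12 ∧
      (∀ k : ℕ, 2 ≤ k → τ (k + 2) = 2 * τ (k + 1) + 8 * τ k) ∧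
      (∀ k : ℕ, 2 ≤ k → 0 < τ k ∧ τ k < τ (k + 1)) ∧
      ∀ k : ℕ, 2 ≤ k → deriv (h (n + k)) z = -(τ k : ℝ) * deriv (h (n + 1)) z := by
  -- differentiability
  have hdiff2 : ∀ m : ℕ, Differentiable ℝ (h m) ∧ Differentiable ℝ (h (m + 1)) := by
    intro m
    induction m with
    | zero =>
      constructor
      · have e : h 0 = fun E => E - lam := funext h0
        rw [e]; exact differentiable_id.sub_const _
      · have e : h 1 = fun E => E ^ 2 - lam ^ 2 - 2 := funext h1
        rw [e]
        exact (((differentiable_id.pow 2).sub_const _).sub_const _)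
    | succ m ih =>
      refine ⟨ih.2, ?_⟩
      have e : h (m + 2) = fun E => h (m + 1) E * ((h m E) ^ 2 - 2) - 2 :=
        funext (hrec m)
      rw [e]
      exact ((ih.2.mul ((ih.1.pow 2).sub_const _)).sub_const _)
  have hdiff : ∀ m : ℕ, Differentiable ℝ (h m) := fun m => (hdiff2 m).1
  -- derivative recursion
  have dform : ∀ m : ℕ, ∀ x : ℝ,
      deriv (h (m + 2)) x
        = deriv (h (m + 1)) x * ((h m x) ^ 2 - 2)
          + h (m + 1) x * (2 * h m x * deriv (h m) x) := by
    intro m x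
    have H1 : HasDerivAt (h (m + 1)) (deriv (h (m + 1)) x) x :=
      ((hdiff (m + 1)) x).hasDerivAt
    have H0 : HasDerivAt (h m) (deriv (h m) x) x := ((hdiff m) x).hasDerivAt
    have H : HasDerivAt (h (m + 2))
        (deriv (h (m + 1)) x * ((h m x) ^ 2 - 2)
          + h (m + 1) x * (2 * h m x * deriv (h m) x)) x := by
      have e : h (m + 2) = fun E => h (m + 1) E * ((h m E) ^ 2 - 2) - 2 :=
        funext (hrec m)
      rw [e]
      have := (H1.mul ((H0.pow 2).sub_const (2 : ℝ))).sub_const (2 : ℝ)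
      refine this.congr_deriv ?_
      simp only [Pi.pow_apply, Nat.cast_ofNat, Nat.add_one_sub_one, pow_one]
    exact H.deriv
  -- values at z
  have hv1 : h (n + 1) z = -2 := by
    cases n with
    | zero =>
      have hzl : z = lam := by have := h0 z; rw [this] at hz; linarith
      rw [h1 z, hzl]; ring
    | succ m =>
      rw [hrec m z, hz]; ring
  have hv : ∀ k : ℕ, h (n + k + 2) z = 2 ∧ h (n + k + 3) z = 2 := by
    intro k
    induction k with
    | zero =>
      constructor
      · rw [hrec n z, hz, hv1]; ring
      · have e : n + 0 + 3 = (n + 1) + 2 := by ring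
        rw [e, hrec (n + 1) z, hrec n z, hz, hv1]; ring
    | succ k ih =>
      refine ⟨by have e : n + (k+1) + 2 = n + k + 3 := by ring
                 rw [e]; exact ih.2, ?_⟩
      have e : n + (k + 1) + 3 = (n + k + 2) + 2 := by ring
      rw [e, hrec (n + k + 2) z]
      have e2 : n + k + 2 + 1 = n + k + 3 := by ring
      rw [e2, ih.1, ih.2]; ring
  -- the three derivative identities
  have A : deriv (h (n + 2)) z = -2 * deriv (h (n + 1)) z := by
    rw [dform n z, hz, hv1]; ring
  have B : deriv (h (n + 3)) z
      = 2 * deriv (h (n + 2)) z - 8 * deriv (h (n + 1)) z := by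
    have e : n + 3 = (n + 1) + 2 := by ring
    rw [e, dform (n + 1) z, hv1]
    have e2 : n + 1 + 1 = n + 2 := by ring
    rw [e2, (hv 0).1]; ring
  have C : ∀ j : ℕ, deriv (h (n + j + 4)) z
      = 2 * deriv (h (n + j + 3)) z + 8 * deriv (h (n + j + 2)) z := by
    intro j
    have e : n + j + 4 = (n + j + 2) + 2 := by ring
    rw [e, dform (n + j + 2) z]
    have e2 : n + j + 2 + 1 = n + j + 3 := by ring
    rw [e2, (hv j).1, (hv j).2]; ring
  refine ⟨A, B, ?_, ?_⟩
  · intro k hk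
    obtain ⟨j, rfl⟩ : ∃ j, k = j + 4 := ⟨k - 4, by omega⟩
    have e1 : n + (j + 4) = n + j + 4 := by ring
    have e2 : n + (j + 4 - 1) = n + j + 3 := by omega
    have e3 : n + (j + 4 - 2) = n + j + 2 := by omega
    rw [e1, e2, e3]; exact C j
  · refine ⟨pdTau, rfl, rfl, ?_, ?_, ?_⟩
    · intro k hk
      obtain ⟨j, rfl⟩ : ∃ j, k = j + 2 := ⟨k - 2, by omega⟩
      rfl
    · have key : ∀ j : ℕ, 0 < pdTau (j + 2) ∧ pdTau (j + 2) < pdTau (j + 3) := by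
        intro j
        induction j with
        | zero => exact ⟨by norm_num [pdTau], by norm_num [pdTau]⟩
        | succ j ih =>
          have e : pdTau (j + 4) = 2 * pdTau (j + 3) + 8 * pdTau (j + 2) := rfl
          have e2 : j + 1 + 2 = j + 3 := by ring
          have e3 : j + 1 + 3 = j + 4 := by ring
          rw [e2, e3, e]
          omega
      intro k hk
      obtain ⟨j, rfl⟩ : ∃ j, k = j + 2 := ⟨k - 2, by omega⟩
      exact (key j)
    · have key : ∀ j : ℕ,
          deriv (h (n + (j + 2))) z = -(pdTau (j + 2) : ℝ) * deriv (h (n + 1)) z ∧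
          deriv (h (n + (j + 3))) z = -(pdTau (j + 3) : ℝ) * deriv (h (n + 1)) z := by
        intro j
        induction j with
        | zero =>
          constructor
          · rw [A]; norm_num [pdTau]
          · rw [B, A]; norm_num [pdTau]; ring
        | succ j ih =>
          have e2 : j + 1 + 2 = j + 3 := by ring
          have e3 : j + 1 + 3 = j + 4 := by ring
          rw [e2, e3]
          refine ⟨ih.2, ?_⟩
          have e4 : n + (j + 4) = n + j + 4 := by ring
          have e5 : n + (j + 3) = n + j + 3 := by ring
          have e6 : n + (j + 2) = n + j + 2 := by ring
          have etau : pdTau (j + 4) = 2 * pdTau (j + 3) + 8 * pdTau (j + 2) := rfl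
          rw [e4, C j, ← e5, ← e6, ih.1, ih.2, etau]
          push_cast; ring
      intro k hk
      obtain ⟨j, rfl⟩ : ∃ j, k = j + 2 := ⟨k - 2, by omega⟩
      exact (key j).1
end
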